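/- arXiv:1004.3176 — 7 statements merged into one kernel-verified Lean document; each statement's English description precedes it below -/
import Mathlib

section
/- Let μ be upper doubling with dominating function λ on a metric space. Let B = B(c_B, r_B) be a ball and R_B ∈ [r_B, 1.2 r_B]. Fix x ∈ B(c_B, R_B) and set h = R_B − d(x, c_B) > 0. Then ∫_{B(c_B, 3r_B) ∖ B(c_B, R_B)} min(1/λ(x, d(x,y)), 1/λ(y, d(x,y))) dμ(y) ≤ C · log(10 r_B / h), where C depends only on C_λ. -/
/-!
Every `y` in `B(c, 3r) ∖ B(c, R)` satisfies `h ≤ d(x, y) < 5r`, so the domain is covered by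
at most `log₂ (10r / h)` dyadic annuli `2ᵏh ≤ d(x, y) < 2ᵏ⁺¹h` around `x`. On such an annulus the
integrand is at most `1 / λ(x, 2ᵏh)`, while its measure is at most `λ(x, 2ᵏ⁺¹h) ≤ C_λ λ(x, 2ᵏh)`;
hence each annulus contributes at most `C_λ`.
-/

open MeasureTheory Metric

structure IsDominatingFunction {X : Type*} [MeasurableSpace X] [MetricSpace X]
    (μ : Measure X) (lam : X → ℝ → ℝ) (Cl : ℝ) : Prop where
  pos : ∀ x r, 0 < r → 0 < lam x r
  mono : ∀ x r s, 0 < r → r ≤ s → lam x r ≤ lam x s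
  doubling : ∀ x r, 0 < r → lam x (2 * r) ≤ Cl * lam x r
  measure_ball_le : ∀ x r, 0 < r → μ (ball x r) ≤ ENNReal.ofReal (lam x r)

lemma exists_lt_two_pow_le_logb {t : ℝ} (ht : 1 ≤ t) :
    ∃ N : ℕ, t < 2 ^ N ∧ (N : ℝ) ≤ Real.logb 2 (2 * t) := by
  obtain ⟨k, hk, hkt⟩ := exists_nat_pow_near ht one_lt_two
  refine ⟨k + 1, hkt, ?_⟩
  rw [Real.le_logb_iff_rpow_le one_lt_two (by positivity), Real.rpow_natCast, pow_succ']
  gcongr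

lemma dist_bounds_of_mem_ball_diff {X : Type*} [MetricSpace X] {c x y : X} {s R : ℝ}
    (hy : y ∈ ball c s \ ball c R) : R - dist x c ≤ dist x y ∧ dist x y < dist x c + s := by
  obtain ⟨hys, hyR⟩ := hy
  rw [mem_ball, not_lt] at hyR
  rw [mem_ball'] at hys
  constructor
  · linarith [dist_triangle y x c, dist_comm x y]
  · linarith [dist_triangle x c y]

namespace IsDominatingFunction

variable {X : Type*} [MeasurableSpace X] [MetricSpace X] {μ : Measure X} {lam : X → ℝ → ℝ}
  {Cl : ℝ}

lemma setLIntegral_annulus_le (hlam : IsDominatingFunction μ lam Cl) (x : X) {ρ : ℝ}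
    (hρ : 0 < ρ) :
    ∫⁻ y in ball x (2 * ρ) \ ball x ρ, ENNReal.ofReal (1 / lam x (dist x y)) ∂μ ≤
      ENNReal.ofReal Cl := by
  set L := lam x ρ
  have hL : 0 < L := hlam.pos x ρ hρ
  have hpoint : ∀ y ∈ ball x (2 * ρ) \ ball x ρ,
      ENNReal.ofReal (1 / lam x (dist x y)) ≤ ENNReal.ofReal (1 / L) := by
    rintro y ⟨-, hy⟩
    rw [mem_ball', not_lt] at hy
    exact ENNReal.ofReal_le_ofReal (one_div_le_one_div_of_le hL (hlam.mono x ρ _ hρ hy))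
  calc ∫⁻ y in ball x (2 * ρ) \ ball x ρ, ENNReal.ofReal (1 / lam x (dist x y)) ∂μ
      ≤ ∫⁻ _ in ball x (2 * ρ) \ ball x ρ, ENNReal.ofReal (1 / L) ∂μ :=
        setLIntegral_mono measurable_const hpoint
    _ = ENNReal.ofReal (1 / L) * μ (ball x (2 * ρ) \ ball x ρ) := setLIntegral_const _ _
    _ ≤ ENNReal.ofReal (1 / L) * ENNReal.ofReal (Cl * L) := by
        gcongr
        calc μ (ball x (2 * ρ) \ ball x ρ)
            ≤ μ (ball x (2 * ρ)) := measure_mono Set.sdiff_subset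
          _ ≤ ENNReal.ofReal (lam x (2 * ρ)) := hlam.measure_ball_le x _ (by positivity)
          _ ≤ ENNReal.ofReal (Cl * L) := ENNReal.ofReal_le_ofReal (hlam.doubling x ρ hρ)
    _ = ENNReal.ofReal Cl := by
        rw [← ENNReal.ofReal_mul (by positivity)]
        congr 1
        field_simp

lemma setLIntegral_le_of_dist_mem_Ico (hlam : IsDominatingFunction μ lam Cl) (x : X)
    {S : Set X} {h : ℝ} (hh : 0 < h) (N : ℕ)
    (hS : ∀ y ∈ S, h ≤ dist x y ∧ dist x y < 2 ^ N * h) :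
    ∫⁻ y in S, ENNReal.ofReal (1 / lam x (dist x y)) ∂μ ≤ N * ENNReal.ofReal Cl := by
  let A : Fin N → Set X := fun k ↦ ball x (2 * (2 ^ (k : ℕ) * h)) \ ball x (2 ^ (k : ℕ) * h)
  have hcover : S ⊆ ⋃ k, A k := by
    intro y hy
    obtain ⟨hhy, hyN⟩ := hS y hy
    obtain ⟨k, hk, hk'⟩ := exists_nat_pow_near ((one_le_div hh).2 hhy) one_lt_two
    rw [le_div_iff₀ hh] at hk
    rw [div_lt_iff₀ hh, pow_succ'] at hk'
    have hkN : k < N := by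
      have : (2 : ℝ) ^ k < 2 ^ N := lt_of_mul_lt_mul_right (hk.trans_lt hyN) hh.le
      exact (pow_lt_pow_iff_right₀ one_lt_two).1 this
    refine Set.mem_iUnion.2 ⟨⟨k, hkN⟩, ?_, ?_⟩
    · rw [mem_ball']; linarith
    · rw [mem_ball', not_lt]; exact hk
  calc ∫⁻ y in S, ENNReal.ofReal (1 / lam x (dist x y)) ∂μ
      ≤ ∫⁻ y in ⋃ k, A k, ENNReal.ofReal (1 / lam x (dist x y)) ∂μ :=
        lintegral_mono_set hcover
    _ ≤ ∑' k, ∫⁻ y in A k, ENNReal.ofReal (1 / lam x (dist x y)) ∂μ :=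
        lintegral_iUnion_le _ _
    _ ≤ ∑' _ : Fin N, ENNReal.ofReal Cl :=
        ENNReal.tsum_le_tsum fun k ↦ hlam.setLIntegral_annulus_le x (by positivity)
    _ = N * ENNReal.ofReal Cl := by simp

end IsDominatingFunction

/-- For `μ` upper doubling with dominating function `lam`, a ball `B(c,r)`,
`R ∈ [r, 1.2 r]`, and `x ∈ B(c,R)` with `h = R − d(x,c) > 0`, one has
`∫_{B(c,3r) ∖ B(c,R)} min(1/lam x (d(x,y)), 1/lam y (d(x,y))) dμ(y) ≤ C log(10 r / h)`,
with `C` depending only on `Cl`. -/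
theorem stmt3 (Cl : ℝ) (hCl : 1 ≤ Cl) :
    ∃ C : ℝ, 0 < C ∧
      ∀ (X : Type) [MeasurableSpace X] [MetricSpace X] (μ : Measure X)
        (lam : X → ℝ → ℝ),
        (∀ x r, 0 < r → 0 < lam x r) →
        (∀ x r s, 0 < r → r ≤ s → lam x r ≤ lam x s) →
        (∀ x r, 0 < r → lam x (2 * r) ≤ Cl * lam x r) →
        (∀ x r, 0 < r → μ (ball x r) ≤ ENNReal.ofReal (lam x r)) →
        ∀ (c : X) (r R : ℝ) (x : X), 0 < r → r ≤ R → R ≤ 1.2 * r →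
          x ∈ ball c R →
          ∫⁻ y in ball c (3 * r) \ ball c R,
              ENNReal.ofReal (min (1 / lam x (dist x y)) (1 / lam y (dist x y))) ∂μ ≤
            ENNReal.ofReal (C * Real.log (10 * r / (R - dist x c))) := by
  refine ⟨Cl / Real.log 2, div_pos (by linarith) (Real.log_pos one_lt_two), ?_⟩
  intro X _ _ μ lam hpos hmono hdoub hdom c r R x hr _ hR hx
  have hlam : IsDominatingFunction μ lam Cl := ⟨hpos, hmono, hdoub, hdom⟩
  set h := R - dist x c
  have hh : 0 < h := sub_pos.2 (mem_ball.1 hx)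
  obtain ⟨N, hN, hNlog⟩ :=
    exists_lt_two_pow_le_logb ((one_le_div hh).2 (by linarith [dist_nonneg (x := x) (y := c)]) :
      1 ≤ 5 * r / h)
  rw [div_lt_iff₀ hh] at hN
  have hshell : ∀ y ∈ ball c (3 * r) \ ball c R, h ≤ dist x y ∧ dist x y < 2 ^ N * h :=
    fun y hy ↦ have hxy := dist_bounds_of_mem_ball_diff (x := x) hy; ⟨hxy.1, by linarith⟩
  calc ∫⁻ y in ball c (3 * r) \ ball c R,
        ENNReal.ofReal (min (1 / lam x (dist x y)) (1 / lam y (dist x y))) ∂μ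
      ≤ ∫⁻ y in ball c (3 * r) \ ball c R, ENNReal.ofReal (1 / lam x (dist x y)) ∂μ :=
        lintegral_mono fun y ↦ ENNReal.ofReal_le_ofReal (min_le_left _ _)
    _ ≤ N * ENNReal.ofReal Cl := hlam.setLIntegral_le_of_dist_mem_Ico x hh N hshell
    _ = ENNReal.ofReal (N * Cl) := by
        rw [ENNReal.ofReal_mul (Nat.cast_nonneg _), ENNReal.ofReal_natCast]
    _ ≤ ENNReal.ofReal (Cl / Real.log 2 * Real.log (10 * r / h)) := by
        apply ENNReal.ofReal_le_ofReal
        rw [div_mul_eq_mul_div, mul_div_assoc, Real.log_div_log, mul_comm]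
        rw [← mul_div_assoc, show 2 * (5 * r) = 10 * r by ring] at hNlog
        gcongr
end

section
/- Let μ be upper doubling on a metric space, B = B(c_B, r_B) a ball, and R_B ∈ [r_B, 1.2 r_B] a regularized radius satisfying μ({x : R_B − r_B s < d(x,c_B) < R_B + r_B s}) ≤ C s μ(B(c_B, 3r_B)) for all s ∈ [0, 1.5]. Then ∫_{B(c_B, R_B)} [log(10 r_B / (R_B − d(x,c_B)))]² dμ(x) ≤ C' μ(B(c_B, 3 r_B)). -/
open MeasureTheory Metric

lemma aux_pow (n : ℕ) : ((n:ℝ)+3)^2 ≤ 16 * 2^n := by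
  induction n with
  | zero => norm_num
  | succ n ih =>
    have h2 : (0:ℝ) < 2^n := pow_pos (by norm_num) n
    push_cast [pow_succ] at *
    nlinarith [Nat.cast_nonneg (α := ℝ) n]

/-- If `R ∈ [r, 1.2 r]` is a regularized radius for the ball `B(c,r)`
(in the sense that annuli around the sphere of radius `R` have measure `≤ C s μ(B(c,3r))`),
then `∫_{B(c,R)} (log (10 r / (R − d(x,c))))² dμ(x) ≤ C' μ(B(c,3r))`. -/
theorem stmt4 (C : ℝ) (hC : 0 < C) :
    ∃ C' : ℝ, 0 < C' ∧
      ∀ (X : Type) [MeasurableSpace X] [MetricSpace X] (μ : Measure X)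
        (c : X) (r R : ℝ), 0 < r → r ≤ R → R ≤ 1.2 * r →
        (∀ s : ℝ, 0 ≤ s → s ≤ 1.5 →
          μ {x | R - r * s < dist x c ∧ dist x c < R + r * s} ≤
            ENNReal.ofReal (C * s) * μ (ball c (3 * r))) →
        ∫⁻ x in ball c R,
            ENNReal.ofReal ((Real.log (10 * r / (R - dist x c))) ^ 2) ∂μ ≤
          ENNReal.ofReal C' * μ (ball c (3 * r)) := by
  classical
  refine ⟨432 * C, by positivity, ?_⟩
  intro X _ _ μ c r R hr hrR hR12 hann
  set A : ℕ → Set X := fun n =>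
    {x | R - r * (1.5 * (1/4:ℝ)^n) < dist x c ∧
         dist x c ≤ R - r * (1.5 * (1/4:ℝ)^(n+1))} with hA
  -- cover
  have hcover : ball c R ⊆ ⋃ n, A n := by
    intro x hx
    rw [mem_ball] at hx
    have hd0 : 0 ≤ dist x c := dist_nonneg
    have ht0 : 0 < R - dist x c := by linarith
    have hex : ∃ n, r * (1.5 * (1/4:ℝ)^(n+1)) ≤ R - dist x c := by
      obtain ⟨m, hm⟩ := exists_pow_lt_of_lt_one
        (div_pos ht0 (by linarith : (0:ℝ) < 1.5 * r)) (by norm_num : (1/4:ℝ) < 1)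
      refine ⟨m, ?_⟩
      have h1 : (1/4:ℝ)^(m+1) ≤ (1/4:ℝ)^m :=
        pow_le_pow_of_le_one (by norm_num) (by norm_num) (Nat.le_succ m)
      have h2 : (1/4:ℝ)^m * (1.5 * r) < R - dist x c :=
        (lt_div_iff₀ (by linarith : (0:ℝ) < 1.5 * r)).1 hm
      nlinarith
    have h1 := Nat.find_spec hex
    refine Set.mem_iUnion.2 ⟨Nat.find hex, ?_, by linarith⟩
    show R - r * (1.5 * (1/4:ℝ)^(Nat.find hex)) < dist x c
    rcases Nat.eq_zero_or_pos (Nat.find hex) with h0 | h0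
    · rw [h0]; simp only [pow_zero, mul_one]; nlinarith
    · have h2 := Nat.find_min hex (Nat.sub_lt h0 one_pos)
      push_neg at h2
      have h3 : Nat.find hex - 1 + 1 = Nat.find hex := Nat.succ_pred_eq_of_pos h0
      rw [h3] at h2
      linarith
  -- pointwise bound on layers
  have hptwise : ∀ n : ℕ, ∀ x ∈ A n,
      ENNReal.ofReal ((Real.log (10 * r / (R - dist x c))) ^ 2) ≤
        ENNReal.ofReal (144 * 2^n) := by
    intro n x hx
    obtain ⟨hx1, hx2⟩ := hx
    set t := R - dist x c with htdef
    have hp : (0:ℝ) < r * (1.5 * (1/4:ℝ)^(n+1)) := by positivity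
    have ht1 : r * (1.5 * (1/4:ℝ)^(n+1)) ≤ t := by simp only [htdef]; linarith
    have ht0 : 0 < t := lt_of_lt_of_le hp ht1
    have hd0 : 0 ≤ dist x c := dist_nonneg
    have htle : t ≤ 10 * r := by simp only [htdef]; nlinarith
    have harg1 : 1 ≤ 10 * r / t := (one_le_div ht0).2 htle
    have e3 : (4:ℝ)^(n+3) * (1/4:ℝ)^(n+1) = 16 := by
      have h : (4:ℝ)^(n+3) = 4^(n+1) * 16 := by ring
      rw [h, mul_right_comm, ← mul_pow]
      norm_num
    have hpow4 : (0:ℝ) < (4:ℝ)^(n+3) := by positivity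
    have harg2 : 10 * r / t ≤ (4:ℝ)^(n+3) := by
      rw [div_le_iff₀ ht0]
      nlinarith [mul_le_mul_of_nonneg_left ht1 (le_of_lt hpow4)]
    have hlog0 : 0 ≤ Real.log (10 * r / t) := Real.log_nonneg harg1
    have hlogle : Real.log (10 * r / t) ≤ 3 * ((n:ℝ) + 3) := by
      have h1 : Real.log (10 * r / t) ≤ Real.log ((4:ℝ)^(n+3)) :=
        Real.log_le_log (by linarith) harg2
      rw [Real.log_pow] at h1
      have h4 : Real.log 4 ≤ 3 := by
        have := Real.log_le_sub_one_of_pos (by norm_num : (0:ℝ) < 4)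
        linarith
      have h5 : (0:ℝ) ≤ (n:ℝ) + 3 := by positivity
      calc Real.log (10 * r / t) ≤ ((n:ℝ)+3) * Real.log 4 := by push_cast at h1 ⊢; linarith
        _ ≤ 3 * ((n:ℝ)+3) := by nlinarith
    apply ENNReal.ofReal_le_ofReal
    nlinarith [aux_pow n]
  -- measure of layers
  have hmeas : ∀ n : ℕ, μ (A n) ≤
      ENNReal.ofReal (C * (1.5 * (1/4:ℝ)^n)) * μ (ball c (3 * r)) := by
    intro n
    have hsub : A n ⊆ {x | R - r * (1.5 * (1/4:ℝ)^n) < dist x c ∧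
        dist x c < R + r * (1.5 * (1/4:ℝ)^n)} := by
      intro x ⟨hx1, hx2⟩
      have hp : (0:ℝ) < r * (1.5 * (1/4:ℝ)^(n+1)) := by positivity
      have hp2 : (0:ℝ) < r * (1.5 * (1/4:ℝ)^n) := by positivity
      exact ⟨hx1, by linarith⟩
    have h14 : (1/4:ℝ)^n ≤ 1 := pow_le_one₀ (by norm_num) (by norm_num)
    calc μ (A n) ≤ μ _ := measure_mono hsub
      _ ≤ _ := hann (1.5 * (1/4:ℝ)^n) (by positivity) (by nlinarith)
  -- main chain
  calc ∫⁻ x in ball c R,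
          ENNReal.ofReal ((Real.log (10 * r / (R - dist x c))) ^ 2) ∂μ
      ≤ ∫⁻ x in ⋃ n, A n,
          ENNReal.ofReal ((Real.log (10 * r / (R - dist x c))) ^ 2) ∂μ :=
        lintegral_mono_set hcover
    _ ≤ ∑' n, ∫⁻ x in A n,
          ENNReal.ofReal ((Real.log (10 * r / (R - dist x c))) ^ 2) ∂μ :=
        lintegral_iUnion_le _ _
    _ ≤ ∑' n, ENNReal.ofReal (144 * 2^n) *
          (ENNReal.ofReal (C * (1.5 * (1/4:ℝ)^n)) * μ (ball c (3 * r))) := by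
        refine ENNReal.tsum_le_tsum fun n => ?_
        calc ∫⁻ x in A n,
              ENNReal.ofReal ((Real.log (10 * r / (R - dist x c))) ^ 2) ∂μ
            ≤ ∫⁻ _ in A n, ENNReal.ofReal (144 * 2^n) ∂μ :=
              setLIntegral_mono measurable_const (hptwise n)
          _ = ENNReal.ofReal (144 * 2^n) * μ (A n) := setLIntegral_const _ _
          _ ≤ _ := mul_le_mul_right (hmeas n) _
    _ = ∑' n : ℕ, ENNReal.ofReal (216 * C * (1/2:ℝ)^n) * μ (ball c (3 * r)) := by
        refine tsum_congr fun n => ?_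
        rw [← mul_assoc, ← ENNReal.ofReal_mul (by positivity)]
        congr 2
        have h : (2:ℝ)^n * (1/4:ℝ)^n = (1/2:ℝ)^n := by
          rw [← mul_pow]; norm_num
        linear_combination (216 * C) * h
    _ ≤ ENNReal.ofReal (432 * C) * μ (ball c (3 * r)) := by
        have he : ∀ n : ℕ, ENNReal.ofReal (216 * C * (1/2:ℝ)^n) * μ (ball c (3 * r))
            = (ENNReal.ofReal (216 * C) * μ (ball c (3 * r))) *
              (ENNReal.ofReal (1/2:ℝ))^n := fun n => by
          rw [ENNReal.ofReal_mul (by positivity),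
            ENNReal.ofReal_pow (by norm_num : (0:ℝ) ≤ 1/2)]
          ring
        simp_rw [he]
        rw [ENNReal.tsum_mul_left, ENNReal.tsum_geometric]
        have h12 : ENNReal.ofReal (1/2:ℝ) = 2⁻¹ := by
          rw [show (1/2:ℝ) = (2:ℝ)⁻¹ by norm_num,
            ENNReal.ofReal_inv_of_pos (by norm_num)]
          norm_num
        rw [h12, ENNReal.one_sub_inv_two, inv_inv,
          show (432:ℝ) * C = 2 * (216 * C) by ring,
          ENNReal.ofReal_mul (by norm_num : (0:ℝ) ≤ 2),
          show ENNReal.ofReal (2:ℝ) = 2 by norm_num]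
        exact le_of_eq (by ring)
end

section
/- Let K be a standard kernel with respect to an upper doubling measure μ with dominating function λ. If B = B(c_B, r_B) is a ball and R_B ∈ [r_B, 1.2 r_B] a regularized radius, then ∫_{B(c_B, R_B)} ∫_{B(c_B, 3r_B) ∖ B(c_B, R_B)} |K(x,y)| dμ(y) dμ(x) ≤ C μ(B(c_B, R_B))^{1/2} μ(B(c_B, 3r_B))^{1/2} ≤ C μ(B(c_B, 3 r_B)). -/
/-!
Split `B(c, R)` into the boundary layers where `R - d(x, c)` is of size `R 2⁻ᵏ`. For `x` in the
`k`-th layer, `B(c, 3r) ∖ B(c, R)` lies in `k + 3` dyadic annuli around `x`, and the size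
condition together with the doubling of `λ` bounds the kernel integral over each annulus by
`Bk * Cl`. The regularity of `R` bounds the measure of the `k`-th layer by
`1.5 Creg 2⁻ᵏ μ(B(c, 3r))`, and trivially by `μ(B(c, R))`; taking the geometric mean of the two
bounds leaves the convergent series `∑ (k + 3) 2^(-k/2)`.
-/

open MeasureTheory Metric
open scoped ENNReal

/-- Balls need not be measurable below (the σ-algebra on `X` is unrelated to its metric), hence
this version for an arbitrary set `s`. -/
theorem setLIntegral_le_mul_measure_of_forall_le {α : Type*} [MeasurableSpace α] {μ : Measure α}
    {s : Set α} {f : α → ℝ≥0∞} {c : ℝ≥0∞} (h : ∀ x ∈ s, f x ≤ c) :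
    ∫⁻ x in s, f x ∂μ ≤ c * μ s := by
  obtain ⟨g, hg, hgf, hfg⟩ := exists_measurable_le_lintegral_eq (μ.restrict s) f
  have hgc : ∀ᵐ x ∂μ.restrict s, g x ≤ c := by
    refine ae_iff.2 ?_
    simp only [not_le]
    rw [Measure.restrict_apply (measurableSet_lt measurable_const hg)]
    convert measure_empty (μ := μ)
    exact Set.eq_empty_iff_forall_notMem.2 fun x ⟨hx, hxs⟩ =>
      (hgf x).trans (h x hxs) |>.not_gt hx
  calc ∫⁻ x in s, f x ∂μ = ∫⁻ x in s, g x ∂μ := hfg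
    _ ≤ ∫⁻ _ in s, c ∂μ := lintegral_mono_ae hgc
    _ = c * μ s := setLIntegral_const s c

theorem ENNReal.le_rpow_half_mul_rpow_half {x a b : ℝ≥0∞} (ha : x ≤ a) (hb : x ≤ b) :
    x ≤ a ^ (1 / 2 : ℝ) * b ^ (1 / 2 : ℝ) :=
  calc x = x ^ (1 / 2 : ℝ) * x ^ (1 / 2 : ℝ) := by
        rw [← ENNReal.rpow_add_of_nonneg _ _ (by norm_num) (by norm_num)]; norm_num
    _ ≤ a ^ (1 / 2 : ℝ) * b ^ (1 / 2 : ℝ) := by gcongr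

theorem ENNReal.rpow_half_mul_rpow_half_le {a b : ℝ≥0∞} (h : a ≤ b) :
    a ^ (1 / 2 : ℝ) * b ^ (1 / 2 : ℝ) ≤ b :=
  calc a ^ (1 / 2 : ℝ) * b ^ (1 / 2 : ℝ) ≤ b ^ (1 / 2 : ℝ) * b ^ (1 / 2 : ℝ) := by gcongr
    _ = b := by rw [← ENNReal.rpow_add_of_nonneg _ _ (by norm_num) (by norm_num)]; norm_num

theorem exists_div_two_pow_lt_le {t a : ℝ} (ht : 0 < t) (hta : t ≤ a) :
    ∃ n : ℕ, a / 2 ^ (n + 1) < t ∧ t ≤ a / 2 ^ n := by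
  obtain ⟨n, hn, hn'⟩ := exists_nat_pow_near (one_le_div_iff.2 (Or.inl ⟨ht, hta⟩))
    (by norm_num : (1 : ℝ) < 2)
  refine ⟨n, ?_, ?_⟩
  · rwa [div_lt_iff₀ (by positivity), mul_comm, ← div_lt_iff₀ ht]
  · rwa [le_div_iff₀ (by positivity), mul_comm, ← le_div_iff₀ ht]

theorem summable_add_mul_rpow_half_div_two_pow {a : ℝ} (ha : 0 ≤ a) (m : ℝ) :
    Summable fun k : ℕ => ((k : ℝ) + m) * (a / 2 ^ k) ^ (1 / 2 : ℝ) := by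
  set q : ℝ := (2 ^ (1 / 2 : ℝ))⁻¹
  have hq : ‖q‖ < 1 := by
    rw [Real.norm_of_nonneg (by positivity)]
    exact inv_lt_one_of_one_lt₀ (Real.one_lt_rpow (by norm_num) (by norm_num))
  have hterm : ∀ k : ℕ, ((k : ℝ) + m) * (a / 2 ^ k) ^ (1 / 2 : ℝ) =
      a ^ (1 / 2 : ℝ) * ((k : ℝ) ^ 1 * q ^ k + m * q ^ k) := by
    intro k
    rw [Real.div_rpow ha (by positivity), ← Real.rpow_pow_comm (by norm_num), inv_pow]
    ring
  simp_rw [hterm]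
  exact ((summable_pow_mul_geometric_of_norm_lt_one 1 hq).add
    ((summable_geometric_of_norm_lt_one hq).mul_left m)).mul_left _

section Kernel

variable {X : Type*} [MetricSpace X]

def boundaryLayer (c : X) (R : ℝ) (k : ℕ) : Set X :=
  {x | R / 2 ^ (k + 1) < R - dist x c ∧ R - dist x c ≤ R / 2 ^ k}

theorem ball_subset_iUnion_boundaryLayer (c : X) (R : ℝ) :
    ball c R ⊆ ⋃ k, boundaryLayer c R k := fun _ hx =>
  Set.mem_iUnion.2 <| exists_div_two_pow_lt_le (sub_pos.2 (mem_ball.1 hx))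
    (sub_le_self _ dist_nonneg)

theorem boundaryLayer_subset_ball {R : ℝ} (hR : 0 ≤ R) (c : X) (k : ℕ) :
    boundaryLayer c R k ⊆ ball c R := fun x hx => by
  have : 0 ≤ R / 2 ^ (k + 1) := by positivity
  exact mem_ball.2 (by linarith [hx.1])

theorem boundaryLayer_subset_annulus {c : X} {r R : ℝ} (hr : 0 < r) (hR0 : 0 ≤ R)
    (hR : R ≤ 1.2 * r) (k : ℕ) :
    boundaryLayer c R k ⊆
      {x | R - r * (1.5 / 2 ^ k) < dist x c ∧ dist x c < R + r * (1.5 / 2 ^ k)} := by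
  intro x hx
  have hxR := mem_ball.1 (boundaryLayer_subset_ball hR0 c k hx)
  have hRk : R / 2 ^ k < r * (1.5 / 2 ^ k) := by
    rw [mul_div_assoc', div_lt_div_iff_of_pos_right (by positivity)]; linarith
  have : 0 < r * (1.5 / 2 ^ k) := by positivity
  exact ⟨by linarith [hx.2], by linarith⟩

def HasSizeBound (K : X → X → ℂ) (lam : X → ℝ → ℝ) (Bk : ℝ) : Prop :=
  ∀ x y, x ≠ y → ‖K x y‖ ≤ Bk * min (1 / lam x (dist x y)) (1 / lam y (dist x y))

variable [MeasurableSpace X]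

structure IsDominatingFunction_s5 (μ : Measure X) (lam : X → ℝ → ℝ) (Cl : ℝ) : Prop where
  pos : ∀ x r, 0 < r → 0 < lam x r
  mono : ∀ x r s, 0 < r → r ≤ s → lam x r ≤ lam x s
  le_two_mul : ∀ x r, 0 < r → lam x (2 * r) ≤ Cl * lam x r
  measure_ball_le : ∀ x r, 0 < r → μ (ball x r) ≤ ENNReal.ofReal (lam x r)

def IsRegularizedRadius (μ : Measure X) (c : X) (r R Creg : ℝ) : Prop :=
  ∀ s : ℝ, 0 ≤ s → s ≤ 1.5 →
    μ {x | R - r * s < dist x c ∧ dist x c < R + r * s} ≤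
      ENNReal.ofReal (Creg * s) * μ (ball c (3 * r))

variable {μ : Measure X} {lam : X → ℝ → ℝ} {Cl : ℝ} {K : X → X → ℂ} {Bk : ℝ}

theorem HasSizeBound.norm_le (hK : HasSizeBound K lam Bk) (hlam : IsDominatingFunction_s5 μ lam Cl)
    (hBk : 0 ≤ Bk) {x y : X} {ρ : ℝ} (hρ : 0 < ρ) (hy : ρ ≤ dist x y) :
    ‖K x y‖ ≤ Bk / lam x ρ :=
  calc ‖K x y‖ ≤ Bk * min (1 / lam x (dist x y)) (1 / lam y (dist x y)) :=
        hK x y (dist_pos.1 (hρ.trans_le hy))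
    _ ≤ Bk * (1 / lam x ρ) := by
        gcongr
        exact (min_le_left _ _).trans <|
          one_div_le_one_div_of_le (hlam.pos x ρ hρ) (hlam.mono x ρ _ hρ hy)
    _ = Bk / lam x ρ := mul_one_div _ _

theorem lintegral_annulus_le (hlam : IsDominatingFunction_s5 μ lam Cl) (hK : HasSizeBound K lam Bk)
    (hBk : 0 ≤ Bk) (x : X) {ρ : ℝ} (hρ : 0 < ρ) :
    ∫⁻ y in {y | ρ ≤ dist x y ∧ dist x y < 2 * ρ}, ENNReal.ofReal ‖K x y‖ ∂μ ≤
      ENNReal.ofReal (Bk * Cl) := by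
  have hlamρ := hlam.pos x ρ hρ
  calc _ ≤ ENNReal.ofReal (Bk / lam x ρ) * μ {y | ρ ≤ dist x y ∧ dist x y < 2 * ρ} :=
        setLIntegral_le_mul_measure_of_forall_le fun y hy =>
          ENNReal.ofReal_le_ofReal (hK.norm_le hlam hBk hρ hy.1)
    _ ≤ ENNReal.ofReal (Bk / lam x ρ) * ENNReal.ofReal (Cl * lam x ρ) := by
        gcongr
        calc _ ≤ μ (ball x (2 * ρ)) := measure_mono fun y hy => mem_ball'.2 hy.2
          _ ≤ ENNReal.ofReal (lam x (2 * ρ)) := hlam.measure_ball_le x _ (by positivity)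
          _ ≤ _ := ENNReal.ofReal_le_ofReal (hlam.le_two_mul x ρ hρ)
    _ = ENNReal.ofReal (Bk * Cl) := by
        rw [← ENNReal.ofReal_mul (by positivity)]
        congr 1
        field_simp

theorem lintegral_dyadic_annuli_le (hlam : IsDominatingFunction_s5 μ lam Cl)
    (hK : HasSizeBound K lam Bk) (hBk : 0 ≤ Bk) (x : X) {ρ : ℝ} (hρ : 0 < ρ) (n : ℕ) :
    ∫⁻ y in {y | ρ ≤ dist x y ∧ dist x y < 2 ^ n * ρ}, ENNReal.ofReal ‖K x y‖ ∂μ ≤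
      n * ENNReal.ofReal (Bk * Cl) := by
  induction n with
  | zero =>
    have hempty : {y | ρ ≤ dist x y ∧ dist x y < 2 ^ 0 * ρ} = ∅ :=
      Set.eq_empty_of_forall_notMem fun y hy => by linarith [hy.1, hy.2]
    rw [hempty]
    simp
  | succ n ih =>
    calc _ ≤ ∫⁻ y in {y | ρ ≤ dist x y ∧ dist x y < 2 ^ n * ρ} ∪
            {y | 2 ^ n * ρ ≤ dist x y ∧ dist x y < 2 * (2 ^ n * ρ)}, ENNReal.ofReal ‖K x y‖ ∂μ := by
          refine lintegral_mono_set fun y ⟨hy, hy'⟩ => ?_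
          rw [pow_succ', mul_assoc] at hy'
          rcases lt_or_ge (dist x y) (2 ^ n * ρ) with h | h
          · exact Or.inl ⟨hy, h⟩
          · exact Or.inr ⟨h, hy'⟩
      _ ≤ n * ENNReal.ofReal (Bk * Cl) + ENNReal.ofReal (Bk * Cl) :=
          (lintegral_union_le _ _ _).trans
            (add_le_add ih (lintegral_annulus_le hlam hK hBk x (by positivity)))
      _ = (n + 1 : ℕ) * ENNReal.ofReal (Bk * Cl) := by push_cast; ring

theorem lintegral_diff_ball_le (hlam : IsDominatingFunction_s5 μ lam Cl) (hK : HasSizeBound K lam Bk)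
    (hBk : 0 ≤ Bk) {c x : X} {ρ R R' : ℝ} (hρ : 0 < ρ) (hx : ρ ≤ R - dist x c) {n : ℕ}
    (hn : R + R' ≤ 2 ^ n * ρ) :
    ∫⁻ y in ball c R' \ ball c R, ENNReal.ofReal ‖K x y‖ ∂μ ≤ n * ENNReal.ofReal (Bk * Cl) := by
  refine (lintegral_mono_set fun y hy => ?_).trans (lintegral_dyadic_annuli_le hlam hK hBk x hρ n)
  obtain ⟨hy', hy⟩ := hy
  rw [mem_ball, not_lt] at hy
  rw [mem_ball'] at hy'
  constructor
  · linarith [dist_triangle y x c, dist_comm x y]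
  · linarith [dist_triangle x c y]

theorem measure_boundaryLayer_le {c : X} {r R Creg : ℝ} (hCreg : 0 ≤ Creg) (hr : 0 < r)
    (hR0 : 0 ≤ R) (hR : R ≤ 1.2 * r)
    (hreg : IsRegularizedRadius μ c r R Creg) (k : ℕ) :
    μ (boundaryLayer c R k) ≤ ENNReal.ofReal ((Creg * 1.5 / 2 ^ k) ^ (1 / 2 : ℝ)) *
      (μ (ball c R) ^ (1 / 2 : ℝ) * μ (ball c (3 * r)) ^ (1 / 2 : ℝ)) := by
  have hs : 1.5 / 2 ^ k ≤ (1.5 : ℝ) := div_le_self (by norm_num) (one_le_pow₀ (by norm_num))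
  calc μ (boundaryLayer c R k)
      ≤ μ (ball c R) ^ (1 / 2 : ℝ) *
          (ENNReal.ofReal (Creg * (1.5 / 2 ^ k)) * μ (ball c (3 * r))) ^ (1 / 2 : ℝ) :=
        ENNReal.le_rpow_half_mul_rpow_half (measure_mono (boundaryLayer_subset_ball hR0 c k))
          ((measure_mono (boundaryLayer_subset_annulus hr hR0 hR k)).trans
            (hreg _ (by positivity) hs))
    _ = _ := by
        rw [ENNReal.mul_rpow_of_nonneg _ _ (by norm_num),
          ENNReal.ofReal_rpow_of_nonneg (by positivity) (by norm_num), mul_div_assoc]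
        ring

theorem lintegral_lintegral_diff_ball_le (hlam : IsDominatingFunction_s5 μ lam Cl)
    (hK : HasSizeBound K lam Bk) (hBk : 0 ≤ Bk) (hCl : 0 ≤ Cl) {c : X} {r R Creg : ℝ}
    (hCreg : 0 ≤ Creg) (hr : 0 < r) (hrR : r ≤ R) (hR : R ≤ 1.2 * r)
    (hreg : IsRegularizedRadius μ c r R Creg) :
    ∫⁻ x in ball c R, ∫⁻ y in ball c (3 * r) \ ball c R, ENNReal.ofReal ‖K x y‖ ∂μ ∂μ ≤
      ENNReal.ofReal (Bk * Cl * ∑' k : ℕ, ((k : ℝ) + 3) * (Creg * 1.5 / 2 ^ k) ^ (1 / 2 : ℝ)) *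
        (μ (ball c R) ^ (1 / 2 : ℝ) * μ (ball c (3 * r)) ^ (1 / 2 : ℝ)) := by
  set M := μ (ball c R) ^ (1 / 2 : ℝ) * μ (ball c (3 * r)) ^ (1 / 2 : ℝ)
  have hR0 : 0 < R := hr.trans_le hrR
  have hinner : ∀ k, ∀ x ∈ boundaryLayer c R k,
      ∫⁻ y in ball c (3 * r) \ ball c R, ENNReal.ofReal ‖K x y‖ ∂μ ≤
        (k + 3 : ℕ) * ENNReal.ofReal (Bk * Cl) := fun k x hx => by
    refine lintegral_diff_ball_le hlam hK hBk (by positivity) hx.1.le ?_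
    rw [show (2 : ℝ) ^ (k + 3) = 4 * 2 ^ (k + 1) by ring, mul_assoc,
      mul_div_cancel₀ _ (by positivity)]
    linarith
  calc _ ≤ ∑' k, ∫⁻ x in boundaryLayer c R k,
          ∫⁻ y in ball c (3 * r) \ ball c R, ENNReal.ofReal ‖K x y‖ ∂μ ∂μ :=
        (lintegral_mono_set (ball_subset_iUnion_boundaryLayer c R)).trans
          (lintegral_iUnion_le _ _)
    _ ≤ ∑' k : ℕ, (k + 3 : ℕ) * ENNReal.ofReal (Bk * Cl) * μ (boundaryLayer c R k) :=
        ENNReal.tsum_le_tsum fun k => setLIntegral_le_mul_measure_of_forall_le (hinner k)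
    _ ≤ ∑' k : ℕ, (k + 3 : ℕ) * ENNReal.ofReal (Bk * Cl) *
          (ENNReal.ofReal ((Creg * 1.5 / 2 ^ k) ^ (1 / 2 : ℝ)) * M) :=
        ENNReal.tsum_le_tsum fun k => by
          gcongr
          exact measure_boundaryLayer_le hCreg hr hR0.le hR hreg k
    _ = ∑' k : ℕ, ENNReal.ofReal (Bk * Cl * (((k : ℝ) + 3) * (Creg * 1.5 / 2 ^ k) ^ (1 / 2 : ℝ)))
          * M := tsum_congr fun k => by
        rw [← ENNReal.ofReal_natCast, ← ENNReal.ofReal_mul (by positivity), ← mul_assoc,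
          ← ENNReal.ofReal_mul (by positivity)]
        congr 2
        push_cast
        ring
    _ = _ := by
        rw [ENNReal.tsum_mul_right, ← ENNReal.ofReal_tsum_of_nonneg (fun k => by positivity)
          ((summable_add_mul_rpow_half_div_two_pow (by positivity) 3).mul_left _), tsum_mul_left]

end Kernel

/-- For a standard kernel `K` (size condition with constant `Bk` relative to
the dominating function `lam` of the upper doubling measure `μ`), a ball `B(c,r)` and a
regularized radius `R ∈ [r, 1.2 r]` (with regularization constant `Creg`), one has
`∫_{B(c,R)} ∫_{B(c,3r)∖B(c,R)} |K(x,y)| dμ(y) dμ(x)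
  ≤ C μ(B(c,R))^{1/2} μ(B(c,3r))^{1/2} ≤ C μ(B(c,3r))`. -/
theorem stmt5 (Cl Bk Creg : ℝ) (hCl : 1 ≤ Cl) (hBk : 0 < Bk) (hCreg : 0 < Creg) :
    ∃ C : ℝ, 0 < C ∧
      ∀ (X : Type) [MeasurableSpace X] [MetricSpace X] (μ : Measure X)
        (lam : X → ℝ → ℝ) (K : X → X → ℂ),
        (∀ x r, 0 < r → 0 < lam x r) →
        (∀ x r s, 0 < r → r ≤ s → lam x r ≤ lam x s) →
        (∀ x r, 0 < r → lam x (2 * r) ≤ Cl * lam x r) →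
        (∀ x r, 0 < r → μ (ball x r) ≤ ENNReal.ofReal (lam x r)) →
        (∀ x y, x ≠ y →
          ‖K x y‖ ≤ Bk * min (1 / lam x (dist x y)) (1 / lam y (dist x y))) →
        ∀ (c : X) (r R : ℝ), 0 < r → r ≤ R → R ≤ 1.2 * r →
        (∀ s : ℝ, 0 ≤ s → s ≤ 1.5 →
          μ {x | R - r * s < dist x c ∧ dist x c < R + r * s} ≤
            ENNReal.ofReal (Creg * s) * μ (ball c (3 * r))) →
        (∫⁻ x in ball c R,
            ∫⁻ y in ball c (3 * r) \ ball c R, ENNReal.ofReal ‖K x y‖ ∂μ ∂μ ≤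
          ENNReal.ofReal C * (μ (ball c R)) ^ ((1 : ℝ) / 2) *
            (μ (ball c (3 * r))) ^ ((1 : ℝ) / 2)) ∧
        ENNReal.ofReal C * (μ (ball c R)) ^ ((1 : ℝ) / 2) *
            (μ (ball c (3 * r))) ^ ((1 : ℝ) / 2) ≤
          ENNReal.ofReal C * μ (ball c (3 * r)) := by
  have hw := summable_add_mul_rpow_half_div_two_pow (a := Creg * 1.5) (by positivity) 3
  refine ⟨Bk * Cl * ∑' k : ℕ, ((k : ℝ) + 3) * (Creg * 1.5 / 2 ^ k) ^ (1 / 2 : ℝ), ?_, ?_⟩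
  · have hCl0 : 0 < Cl := zero_lt_one.trans_le hCl
    have hsum : 0 < ∑' k : ℕ, ((k : ℝ) + 3) * (Creg * 1.5 / 2 ^ k) ^ (1 / 2 : ℝ) :=
      hw.tsum_pos (fun k => by positivity) 0 (by positivity)
    positivity
  intro X _ _ μ lam K hpos hmono hdbl hball hK c r R hr hrR hR hreg
  refine ⟨?_, ?_⟩
  · rw [mul_assoc]
    exact lintegral_lintegral_diff_ball_le ⟨hpos, hmono, hdbl, hball⟩ hK hBk.le (by linarith)
      hCreg.le hr hrR hR hreg
  · rw [mul_assoc]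
    gcongr
    exact ENNReal.rpow_half_mul_rpow_half_le (measure_mono (ball_subset_ball (by linarith)))
end

section
/- Let Q be a set of finite positive μ-measure partitioned into finitely many measurable subsets Q_1, …, Q_s. Let b ∈ L^∞(μ) satisfy |∫_A b dμ| ≥ a μ(A) for appropriate sets A, and in particular |b(Q)| := |∫_Q b dμ| ≥ a μ(Q). Then the subcubes can be re-indexed so that, setting Q̂_k = ∪_{i=k}^{s} Q_i, one has |b(Q̂_k)| ≥ (1 − (k−1)/s) · a · μ(Q) for every k = 1, …, s. -/
/-!
Writing `v i = ∫_{Q_i} b` and `S = ∑ v i`, the sums `S - v j` add up to `(n - 1) • S`, so some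
piece `Q_j` can be discarded while keeping `‖S - v j‖ ≥ (n - 1)/n · ‖S‖`. Discarding pieces
greedily in this way, the factors telescope: `∏_{m = n-k+1}^{n} (m - 1)/m = (n - k)/n`.
The accretivity of `b` on `Q` gives `‖S‖ ≥ a μ(Q)`.
-/

open MeasureTheory

section GreedyOrdering

variable {E : Type*} [SeminormedAddCommGroup E] [NormedSpace ℝ E]

theorem exists_norm_sum_sub_ge {ι : Type*} [Fintype ι] [Nonempty ι] (v : ι → E) :
    ∃ j, (Fintype.card ι - 1 : ℝ) / Fintype.card ι * ‖∑ i, v i‖ ≤ ‖∑ i, v i - v j‖ := by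
  set S := ∑ i, v i
  have hsum : ∑ j, (S - v j) = (Fintype.card ι - 1 : ℝ) • S := by
    rw [Finset.sum_sub_distrib, Finset.sum_const, Finset.card_univ, sub_smul, one_smul,
      Nat.cast_smul_eq_nsmul]
  have hcard : (1 : ℝ) ≤ Fintype.card ι := by exact_mod_cast Fintype.card_pos
  obtain ⟨j, -, hj⟩ := Finset.exists_le_of_sum_le Finset.univ_nonempty <|
    calc ∑ _j : ι, (Fintype.card ι - 1 : ℝ) / Fintype.card ι * ‖S‖
        = (Fintype.card ι - 1 : ℝ) * ‖S‖ := by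
          rw [Finset.sum_const, Finset.card_univ, nsmul_eq_mul]; field_simp
      _ = ‖∑ j, (S - v j)‖ := by rw [hsum, norm_smul, Real.norm_of_nonneg (by linarith)]
      _ ≤ ∑ j, ‖S - v j‖ := norm_sum_le _ _
  exact ⟨j, hj⟩

theorem exists_norm_sum_succAbove_ge {n : ℕ} (v : Fin (n + 1) → E) :
    ∃ j : Fin (n + 1), (n : ℝ) / (n + 1) * ‖∑ i, v i‖ ≤ ‖∑ i, v (j.succAbove i)‖ := by
  obtain ⟨j, hj⟩ := exists_norm_sum_sub_ge v
  refine ⟨j, ?_⟩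
  rwa [Fintype.card_fin, Nat.cast_succ, add_sub_cancel_right,
    show ∑ i, v i - v j = ∑ i, v (j.succAbove i) by
      rw [Fin.sum_univ_succAbove v j, add_sub_cancel_left]] at hj

theorem exists_perm_norm_sum_tail_ge : ∀ {n : ℕ} (v : Fin n → E),
    ∃ σ : Equiv.Perm (Fin n), ∀ k : Fin n,
      (1 - (k : ℝ) / n) * ‖∑ i, v i‖ ≤ ‖∑ i ∈ Finset.univ.filter (k ≤ ·), v (σ i)‖
  | 0, _ => ⟨1, fun k => k.elim0⟩
  | n + 1, v => by
    obtain ⟨j, hj⟩ := exists_norm_sum_succAbove_ge v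
    obtain ⟨τ, hτ⟩ := exists_perm_norm_sum_tail_ge fun i => v (j.succAbove i)
    -- `σ 0 = j` and `σ (i + 1) = j.succAbove (τ i)`
    let σ : Equiv.Perm (Fin (n + 1)) :=
      (finSuccEquiv n).trans (τ.optionCongr.trans (finSuccEquiv' j).symm)
    have hσsucc : ∀ i : Fin n, σ i.succ = j.succAbove (τ i) := by simp [σ]
    refine ⟨σ, Fin.cases ?_ fun k => ?_⟩
    · simp [Equiv.sum_comp]
    · have htail : ∑ i ∈ Finset.univ.filter (k.succ ≤ ·), v (σ i) =
          ∑ i ∈ Finset.univ.filter (k ≤ ·), v (j.succAbove (τ i)) := by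
        rw [Finset.sum_filter, Finset.sum_filter, Fin.sum_univ_succ]
        simp [hσsucc]
      have hk : (k : ℝ) < n := by exact_mod_cast k.is_lt
      have hn : (0 : ℝ) < n := by linarith [(k : ℕ).cast_nonneg (α := ℝ)]
      calc (1 - (k.succ : ℝ) / (n + 1 : ℕ)) * ‖∑ i, v i‖
          = (1 - k / n) * (n / (n + 1) * ‖∑ i, v i‖) := by
            rw [Fin.val_succ]; push_cast; field_simp; ring
        _ ≤ (1 - k / n) * ‖∑ i, v (j.succAbove i)‖ := by
          gcongr
          linarith [(div_le_one hn).mpr hk.le]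
        _ ≤ _ := htail ▸ hτ k

end GreedyOrdering

theorem stmt6_general {X : Type*} [MeasurableSpace X] (μ : Measure X)
    (s : ℕ) (Q : Set X) (Qs : Fin s → Set X)
    (hmeas : ∀ i, MeasurableSet (Qs i))
    (hdisj : Pairwise fun i j => Disjoint (Qs i) (Qs j))
    (hunion : Q = ⋃ i, Qs i)
    (b : X → ℂ) (hb : IntegrableOn b Q μ)
    (a : ℝ)
    (haccr : ∀ t : Finset (Fin s),
      a * (μ (⋃ i ∈ t, Qs i)).toReal ≤ ‖∫ x in ⋃ i ∈ t, Qs i, b x ∂μ‖) :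
    ∃ σ : Equiv.Perm (Fin s), ∀ k : Fin s,
      (1 - (k : ℝ) / s) * a * (μ Q).toReal ≤
        ‖∫ x in ⋃ i ∈ Finset.univ.filter (fun i : Fin s => k ≤ i), Qs (σ i), b x ∂μ‖ := by
  set v : Fin s → ℂ := fun i => ∫ x in Qs i, b x ∂μ
  have hintegral : ∀ (σ : Equiv.Perm (Fin s)) (t : Finset (Fin s)),
      ∫ x in ⋃ i ∈ t, Qs (σ i), b x ∂μ = ∑ i ∈ t, v (σ i) := fun σ t =>
    integral_biUnion_finset t (fun i _ => hmeas (σ i))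
      ((hdisj.comp_of_injective σ.injective).set_pairwise _)
      fun i _ => hb.mono_set (hunion ▸ Set.subset_iUnion Qs (σ i))
  have hQ : a * (μ Q).toReal ≤ ‖∑ i, v i‖ :=
    calc a * (μ Q).toReal = a * (μ (⋃ i ∈ Finset.univ, Qs i)).toReal := by simp [hunion]
      _ ≤ ‖∫ x in ⋃ i ∈ Finset.univ, Qs i, b x ∂μ‖ := haccr Finset.univ
      _ = ‖∑ i, v i‖ := congrArg norm (hintegral 1 Finset.univ)
  obtain ⟨σ, hσ⟩ := exists_perm_norm_sum_tail_ge v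
  refine ⟨σ, fun k => ?_⟩
  have hk : (k : ℝ) / s ≤ 1 :=
    div_le_one_of_le₀ (by exact_mod_cast k.is_lt.le) (Nat.cast_nonneg s)
  rw [hintegral, mul_assoc]
  exact (mul_le_mul_of_nonneg_left hQ (by linarith)).trans (hσ k)

/-- If `Q` is partitioned into measurable pieces `Qs 0, …, Qs (s-1)` and `b`
is accretive (`|∫_A b dμ| ≥ a μ(A)` for finite unions `A` of the pieces, in particular
for `Q` itself), then the pieces can be re-indexed by a permutation `σ` so that the tail
unions `Q̂_k = ∪_{i ≥ k} Q_{σ i}` satisfy `|b(Q̂_k)| ≥ (1 − k/s) a μ(Q)`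
(0-indexed version of `(1 − (k−1)/s)` for `k = 1, …, s`). -/
theorem stmt6 {X : Type*} [MeasurableSpace X] (μ : Measure X)
    (s : ℕ) (hs : 0 < s) (Q : Set X) (Qs : Fin s → Set X)
    (hmeas : ∀ i, MeasurableSet (Qs i))
    (hdisj : Pairwise fun i j => Disjoint (Qs i) (Qs j))
    (hunion : Q = ⋃ i, Qs i)
    (hfin : μ Q ≠ ⊤) (hpos : 0 < μ Q)
    (b : X → ℂ) (hb : IntegrableOn b Q μ)
    (Cb : ℝ) (hbdd : ∀ x, ‖b x‖ ≤ Cb)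
    (a : ℝ) (ha : 0 < a)
    (haccr : ∀ t : Finset (Fin s),
      a * (μ (⋃ i ∈ t, Qs i)).toReal ≤ ‖∫ x in ⋃ i ∈ t, Qs i, b x ∂μ‖) :
    ∃ σ : Equiv.Perm (Fin s), ∀ k : Fin s,
      (1 - (k : ℝ) / s) * a * (μ Q).toReal ≤
        ‖∫ x in ⋃ i ∈ Finset.univ.filter (fun i : Fin s => k ≤ i), Qs (σ i), b x ∂μ‖ :=
  stmt6_general μ s Q Qs hmeas hdisj hunion b hb a haccr
end

section
/- Let D(Q,R) = ℓ(Q) + ℓ(R) + d(Q,R). Suppose Q is good in the sense that whenever ℓ(Q) ≤ δ^r ℓ(R) one has d(Q,R) ≥ c ℓ(Q)^γ ℓ(R)^{1−γ}, and suppose the matrix element bound |T_{RQ}| ≤ C ℓ(Q)^α / (d(Q,R)^α sup_{z∈Q} λ(z,d(Q,R))) · ‖φ_Q‖₁‖ψ_R‖₁ holds when d(Q,R) ≥ CC₀ℓ(Q). Then for ℓ(Q) ≤ ℓ(R) and d(Q,R) ≥ CC₀ℓ(Q): |T_{RQ}| ≤ C' (ℓ(Q)^{α/2} ℓ(R)^{α/2})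 / (D(Q,R)^α sup_{z∈Q} λ(z, D(Q,R))) · ‖φ_Q‖₁ ‖ψ_R‖₁. -/
/-!
Write `D = ℓQ + ℓR + d(Q,R)` and `t = D / d(Q,R) ≥ 1`. Doubling with constant `Cl = 2^d` gives
`λ(z, t ρ) ≤ Cl t^d λ(z, ρ)`, so passing from the scale `d(Q,R)` to `D` costs `Cl t^(α+d)` in the
bound. Both alternatives of goodness give `ℓR / d(Q,R) ≲ (ℓR/ℓQ)^γ` (when `ℓQ > δ^r ℓR` the
separation `d(Q,R) ≥ C C₀ ℓQ` already gives `ℓR / d(Q,R) ≲ 1`), hence `t ≲ (ℓR/ℓQ)^γ`, and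
since `γ (α + d) = α / 2` the loss `t^(α+d)` turns `ℓQ^α` into `ℓQ^(α/2) ℓR^(α/2)`.
-/

open Real Set

section Doubling

variable {f : ℝ → ℝ} {Cl : ℝ}

lemma le_pow_mul_of_doubling (hCl : 0 ≤ Cl) (hdbl : ∀ ρ, 0 < ρ → f (2 * ρ) ≤ Cl * f ρ)
    {ρ : ℝ} (hρ : 0 < ρ) : ∀ n : ℕ, f (2 ^ n * ρ) ≤ Cl ^ n * f ρ
  | 0 => by simp
  | n + 1 => calc
      f (2 ^ (n + 1) * ρ) = f (2 * (2 ^ n * ρ)) := by rw [pow_succ', mul_assoc]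
      _ ≤ Cl * f (2 ^ n * ρ) := hdbl _ (by positivity)
      _ ≤ Cl * (Cl ^ n * f ρ) :=
        mul_le_mul_of_nonneg_left (le_pow_mul_of_doubling hCl hdbl hρ n) hCl
      _ = Cl ^ (n + 1) * f ρ := by ring

lemma le_rpow_mul_of_doubling (hCl : 1 ≤ Cl) (hmono : MonotoneOn f (Ioi 0))
    (hdbl : ∀ ρ, 0 < ρ → f (2 * ρ) ≤ Cl * f ρ) {ρ t : ℝ} (hρ : 0 < ρ) (ht : 1 ≤ t)
    (hfρ : 0 ≤ f ρ) : f (t * ρ) ≤ Cl * t ^ logb 2 Cl * f ρ := by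
  obtain ⟨n, htn, hnt⟩ := exists_nat_pow_near ht one_lt_two
  have hCl0 : 0 < Cl := one_pos.trans_le hCl
  have hpow : Cl ^ (n + 1) ≤ Cl * t ^ logb 2 Cl := calc
    Cl ^ (n + 1) = ((2 : ℝ) ^ (n + 1)) ^ logb 2 Cl := by
      rw [← rpow_natCast_mul zero_le_two, mul_comm, rpow_mul_natCast zero_le_two,
        rpow_logb two_pos (by norm_num) hCl0]
    _ ≤ (2 * t) ^ logb 2 Cl :=
      rpow_le_rpow (by positivity) (by rw [pow_succ']; linarith) (logb_nonneg one_lt_two hCl)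
    _ = Cl * t ^ logb 2 Cl := by
      rw [mul_rpow zero_le_two (by linarith), rpow_logb two_pos (by norm_num) hCl0]
  calc f (t * ρ) ≤ f (2 ^ (n + 1) * ρ) :=
        hmono (mem_Ioi.2 (by positivity)) (mem_Ioi.2 (by positivity)) (by gcongr)
    _ ≤ Cl ^ (n + 1) * f ρ := le_pow_mul_of_doubling hCl0.le hdbl hρ (n + 1)
    _ ≤ Cl * t ^ logb 2 Cl * f ρ := mul_le_mul_of_nonneg_right hpow hfρ

end Doubling

lemma IsLUB.le_mul_rpow_logb_of_doubling {X : Type*} {lam : X → ℝ → ℝ} {Q : Set X}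
    {Cl ρ t Λ₁ Λ₂ : ℝ} (h₂ : IsLUB ((fun z => lam z (t * ρ)) '' Q) Λ₂)
    (h₁ : Λ₁ ∈ upperBounds ((fun z => lam z ρ) '' Q)) (hCl : 1 ≤ Cl)
    (hmono : ∀ x, MonotoneOn (lam x) (Ioi 0)) (hdbl : ∀ x ρ, 0 < ρ → lam x (2 * ρ) ≤ Cl * lam x ρ)
    (hρ : 0 < ρ) (ht : 1 ≤ t) (hnonneg : ∀ x ∈ Q, 0 ≤ lam x ρ) :
    Λ₂ ≤ Cl * t ^ logb 2 Cl * Λ₁ :=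
  h₂.2 <| forall_mem_image.2 fun _ hz =>
    (le_rpow_mul_of_doubling hCl (hmono _) (hdbl _) hρ ht (hnonneg _ hz)).trans <|
      mul_le_mul_of_nonneg_left (h₁ (mem_image_of_mem _ hz)) (by positivity)

lemma div_le_max_mul_rpow_of_good {ℓQ ℓR dQR a b c γ : ℝ} (hℓQ : 0 < ℓQ) (hℓ : ℓQ ≤ ℓR)
    (hdQR : 0 < dQR) (ha : 0 < a) (hb : 0 < b) (hc : 0 < c) (hγ : 0 ≤ γ)
    (hsep : a * ℓQ ≤ dQR) (hgood : ℓQ ≤ b * ℓR → c * ℓQ ^ γ * ℓR ^ (1 - γ) ≤ dQR) :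
    ℓR / dQR ≤ max (1 / (a * b)) (1 / c) * (ℓR / ℓQ) ^ γ := by
  have hℓR : 0 < ℓR := hℓQ.trans_le hℓ
  have hs : 1 ≤ (ℓR / ℓQ) ^ γ := one_le_rpow ((one_le_div hℓQ).2 hℓ) hγ
  by_cases hQR : ℓQ ≤ b * ℓR
  · have hsplit : c * ℓQ ^ γ * ℓR ^ (1 - γ) = c * ℓR / (ℓR / ℓQ) ^ γ := by
      rw [div_rpow hℓR.le hℓQ.le, rpow_sub hℓR, rpow_one]
      field_simp
    calc ℓR / dQR ≤ ℓR / (c * ℓR / (ℓR / ℓQ) ^ γ) :=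
          div_le_div_of_nonneg_left hℓR.le (by positivity) (hsplit ▸ hgood hQR)
      _ = 1 / c * (ℓR / ℓQ) ^ γ := by field_simp
      _ ≤ _ := by gcongr; exact le_max_right _ _
  · calc ℓR / dQR ≤ 1 / (a * b) := by
          rw [div_le_div_iff₀ hdQR (by positivity)]
          nlinarith [mul_lt_mul_of_pos_left (not_le.1 hQR) ha]
      _ ≤ max (1 / (a * b)) (1 / c) * 1 := by rw [mul_one]; exact le_max_left _ _
      _ ≤ _ := by gcongr

lemma add_add_div_le_mul_rpow_of_good {ℓQ ℓR dQR a b c γ : ℝ} (hℓQ : 0 < ℓQ) (hℓ : ℓQ ≤ ℓR)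
    (hdQR : 0 < dQR) (ha : 0 < a) (hb : 0 < b) (hc : 0 < c) (hγ : 0 ≤ γ)
    (hsep : a * ℓQ ≤ dQR) (hgood : ℓQ ≤ b * ℓR → c * ℓQ ^ γ * ℓR ^ (1 - γ) ≤ dQR) :
    (ℓQ + ℓR + dQR) / dQR ≤ (1 + 2 * max (1 / (a * b)) (1 / c)) * (ℓR / ℓQ) ^ γ := by
  have hs : 1 ≤ (ℓR / ℓQ) ^ γ := one_le_rpow ((one_le_div hℓQ).2 hℓ) hγ
  calc (ℓQ + ℓR + dQR) / dQR ≤ 1 + 2 * (ℓR / dQR) := by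
        rw [div_le_iff₀ hdQR, add_mul, one_mul, mul_assoc, div_mul_cancel₀ _ hdQR.ne']
        linarith
    _ ≤ 1 + 2 * (max (1 / (a * b)) (1 / c) * (ℓR / ℓQ) ^ γ) := by
        gcongr; exact div_le_max_mul_rpow_of_good hℓQ hℓ hdQR ha hb hc hγ hsep hgood
    _ ≤ _ := by nlinarith [le_max_right (1 / (a * b)) (1 / c), one_div_pos.2 hc]

lemma div_rpow_mul_le_of_le_mul_rpow {a ρ t Λ₁ Λ₂ Cl α d : ℝ} (ha : 0 ≤ a) (hρ : 0 < ρ)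
    (ht : 0 < t) (hΛ₁ : 0 < Λ₁) (hΛ₂ : 0 < Λ₂) (h : Λ₂ ≤ Cl * t ^ d * Λ₁) :
    a / (ρ ^ α * Λ₁) ≤ Cl * t ^ (α + d) * a / ((t * ρ) ^ α * Λ₂) := by
  rw [div_le_div_iff₀ (by positivity) (by positivity), mul_rpow ht.le hρ.le, rpow_add ht]
  calc a * (t ^ α * ρ ^ α * Λ₂) ≤ a * (t ^ α * ρ ^ α * (Cl * t ^ d * Λ₁)) := by gcongr
    _ = Cl * (t ^ α * t ^ d) * a * (ρ ^ α * Λ₁) := by ring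

lemma rpow_mul_le_of_le_mul_div_rpow {ℓQ ℓR t K α γ e : ℝ} (hℓQ : 0 < ℓQ) (hℓR : 0 < ℓR)
    (ht : 0 ≤ t) (hK : 0 ≤ K) (he : 0 ≤ e) (hγe : γ * e = α / 2) (htK : t ≤ K * (ℓR / ℓQ) ^ γ) :
    t ^ e * ℓQ ^ α ≤ K ^ e * (ℓQ ^ (α / 2) * ℓR ^ (α / 2)) := by
  have hsplit : ℓQ ^ α = ℓQ ^ (α / 2) * ℓQ ^ (α / 2) := by rw [← rpow_add hℓQ, add_halves]
  calc t ^ e * ℓQ ^ α ≤ (K * (ℓR / ℓQ) ^ γ) ^ e * ℓQ ^ α := by gcongr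
    _ = K ^ e * (ℓR ^ (α / 2) / ℓQ ^ (α / 2)) * ℓQ ^ α := by
      rw [mul_rpow hK (by positivity), ← rpow_mul (by positivity), hγe,
        div_rpow hℓR.le hℓQ.le]
    _ = K ^ e * (ℓQ ^ (α / 2) * ℓR ^ (α / 2)) := by
      rw [hsplit]; field_simp

lemma div_rpow_mul_le_of_rescale {ℓQ ℓR ρ t Λ₁ Λ₂ Cl K α d γ : ℝ} (hℓQ : 0 < ℓQ)
    (hℓR : 0 < ℓR) (hρ : 0 < ρ) (ht : 0 < t) (hΛ₁ : 0 < Λ₁) (hΛ₂ : 0 < Λ₂) (hCl : 0 ≤ Cl)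
    (hK : 0 ≤ K) (hαd : 0 ≤ α + d) (hγ : γ * (α + d) = α / 2) (hΛ : Λ₂ ≤ Cl * t ^ d * Λ₁)
    (htK : t ≤ K * (ℓR / ℓQ) ^ γ) :
    ℓQ ^ α / (ρ ^ α * Λ₁) ≤
      Cl * K ^ (α + d) * (ℓQ ^ (α / 2) * ℓR ^ (α / 2) / ((t * ρ) ^ α * Λ₂)) := calc
  _ ≤ Cl * (t ^ (α + d) * ℓQ ^ α) / ((t * ρ) ^ α * Λ₂) := by
    rw [← mul_assoc]; exact div_rpow_mul_le_of_le_mul_rpow (by positivity) hρ ht hΛ₁ hΛ₂ hΛ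
  _ ≤ Cl * (K ^ (α + d) * (ℓQ ^ (α / 2) * ℓR ^ (α / 2))) / ((t * ρ) ^ α * Λ₂) := by
    gcongr Cl * ?_ / _
    exact rpow_mul_le_of_le_mul_div_rpow hℓQ hℓR ht.le hK hαd hγ htK
  _ = _ := by ring

theorem stmt12_general (Cl α δ c C C₀ : ℝ) (r : ℕ) (d γ : ℝ)
    (hCl : 1 ≤ Cl) (hα : 0 < α) (hδ0 : 0 < δ)
    (hc : 0 < c) (hC : 0 < C) (hC₀ : 0 < C₀)
    (hd : d = Real.logb 2 Cl) (hγ : γ = α / (2 * (α + d))) :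
    ∃ C' : ℝ, 0 < C' ∧
      ∀ (X : Type) [MetricSpace X] (lam : X → ℝ → ℝ),
        (∀ x ρ, 0 < ρ → 0 < lam x ρ) →
        (∀ x ρ σ, 0 < ρ → ρ ≤ σ → lam x ρ ≤ lam x σ) →
        (∀ x ρ, 0 < ρ → lam x (2 * ρ) ≤ Cl * lam x ρ) →
        ∀ (Q : Set X), Q.Nonempty →
        ∀ (ℓQ ℓR dQR nφ nψ : ℝ) (T : ℂ),
        0 < ℓQ → 0 < ℓR → ℓQ ≤ ℓR → 0 ≤ nφ → 0 ≤ nψ →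
        0 < dQR → dQR ≥ C * C₀ * ℓQ →
        (ℓQ ≤ δ ^ r * ℓR → dQR ≥ c * ℓQ ^ γ * ℓR ^ (1 - γ)) →
        ∀ (ΛdQR ΛD : ℝ),
        IsLUB ((fun z => lam z dQR) '' Q) ΛdQR →
        IsLUB ((fun z => lam z (ℓQ + ℓR + dQR)) '' Q) ΛD →
        ‖T‖ ≤ C * (ℓQ ^ α / (dQR ^ α * ΛdQR)) * nφ * nψ →
        ‖T‖ ≤ C' * (ℓQ ^ (α / 2) * ℓR ^ (α / 2) /
          ((ℓQ + ℓR + dQR) ^ α * ΛD)) * nφ * nψ := by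
  have hd0 : 0 ≤ d := hd ▸ logb_nonneg one_lt_two hCl
  set K := 1 + 2 * max (1 / (C * C₀ * δ ^ r)) (1 / c)
  have hK : 0 < K := by positivity
  refine ⟨C * Cl * K ^ (α + d), by positivity, ?_⟩
  intro X _ lam hpos hmono hdbl Q hQ ℓQ ℓR dQR nφ nψ T hℓQ hℓR hℓ hnφ hnψ hdQR hsep hgood
    ΛdQR ΛD hlubd hlubD hT
  obtain ⟨z₀, hz₀⟩ := hQ
  set D := ℓQ + ℓR + dQR
  set t := D / dQR
  have hD : D = t * dQR := (div_mul_cancel₀ D hdQR.ne').symm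
  have ht : 1 ≤ t := (one_le_div hdQR).2 (by linarith)
  have hΛdQR : 0 < ΛdQR := (hpos z₀ dQR hdQR).trans_le (hlubd.1 (mem_image_of_mem _ hz₀))
  have hΛD : 0 < ΛD := (hpos z₀ D (by positivity)).trans_le (hlubD.1 (mem_image_of_mem _ hz₀))
  have hΛ : ΛD ≤ Cl * t ^ d * ΛdQR := hd ▸ (hD ▸ hlubD).le_mul_rpow_logb_of_doubling hlubd.1 hCl
    (fun z ρ hρ σ _ hρσ => hmono z ρ σ hρ hρσ) hdbl hdQR ht fun z _ => (hpos z dQR hdQR).le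
  have hγ0 : 0 ≤ γ := by rw [hγ]; positivity
  have htK : t ≤ K * (ℓR / ℓQ) ^ γ :=
    add_add_div_le_mul_rpow_of_good hℓQ hℓ hdQR (by positivity) (pow_pos hδ0 r) hc hγ0 hsep hgood
  have hγd : γ * (α + d) = α / 2 := by rw [hγ]; field_simp
  have hbound := div_rpow_mul_le_of_rescale hℓQ hℓR hdQR (by linarith) hΛdQR hΛD (by linarith)
    hK.le (by linarith) hγd hΛ htK
  rw [← hD] at hbound
  refine hT.trans ?_
  gcongr ?_ * nφ * nψ
  rw [mul_assoc C Cl, mul_assoc C (Cl * _)]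
  exact mul_le_mul_of_nonneg_left hbound hC.le

/-- Let `D(Q,R) = ℓQ + ℓR + d(Q,R)`. If `Q` is good (whenever
`ℓQ ≤ δ^r ℓR` one has `d(Q,R) ≥ c ℓQ^γ ℓR^{1−γ}`) and the separated matrix element bound
`|T_{RQ}| ≤ C ℓQ^α / (d(Q,R)^α · sup_{z∈Q} lam(z, d(Q,R))) ‖φQ‖₁ ‖ψR‖₁` holds whenever
`d(Q,R) ≥ C C₀ ℓQ`, then for `ℓQ ≤ ℓR` and `d(Q,R) ≥ C C₀ ℓQ`:
`|T_{RQ}| ≤ C' ℓQ^{α/2} ℓR^{α/2} / (D(Q,R)^α · sup_{z∈Q} lam(z, D(Q,R))) ‖φQ‖₁ ‖ψR‖₁`. -/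
theorem stmt12 (Cl α δ c C C₀ : ℝ) (r : ℕ) (d γ : ℝ)
    (hCl : 1 ≤ Cl) (hα : 0 < α) (hδ0 : 0 < δ) (hδ1 : δ < 1)
    (hc : 0 < c) (hC : 0 < C) (hC₀ : 0 < C₀)
    (hd : d = Real.logb 2 Cl) (hγ : γ = α / (2 * (α + d))) :
    ∃ C' : ℝ, 0 < C' ∧
      ∀ (X : Type) [MetricSpace X] (lam : X → ℝ → ℝ),
        (∀ x ρ, 0 < ρ → 0 < lam x ρ) →
        (∀ x ρ σ, 0 < ρ → ρ ≤ σ → lam x ρ ≤ lam x σ) →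
        (∀ x ρ, 0 < ρ → lam x (2 * ρ) ≤ Cl * lam x ρ) →
        ∀ (Q : Set X), Q.Nonempty →
        ∀ (ℓQ ℓR dQR nφ nψ : ℝ) (T : ℂ),
        0 < ℓQ → 0 < ℓR → ℓQ ≤ ℓR → 0 ≤ nφ → 0 ≤ nψ →
        0 < dQR → dQR ≥ C * C₀ * ℓQ →
        (ℓQ ≤ δ ^ r * ℓR → dQR ≥ c * ℓQ ^ γ * ℓR ^ (1 - γ)) →
        ∀ (ΛdQR ΛD : ℝ),
        IsLUB ((fun z => lam z dQR) '' Q) ΛdQR →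
        IsLUB ((fun z => lam z (ℓQ + ℓR + dQR)) '' Q) ΛD →
        ‖T‖ ≤ C * (ℓQ ^ α / (dQR ^ α * ΛdQR)) * nφ * nψ →
        ‖T‖ ≤ C' * (ℓQ ^ (α / 2) * ℓR ^ (α / 2) /
          ((ℓQ + ℓR + dQR) ^ α * ΛD)) * nφ * nψ :=
  stmt12_general Cl α δ c C C₀ r d γ hCl hα hδ0 hc hC hC₀ hd hγ
end

section
/- In a geometrically doubling metric space, consider reference points z^k_α at level k with pairwise distances d(z^k_α, z^k_β) ≥ δ^k and covering property min_α d(x, z^k_α) < δ^k. Say (k,α) and (k,β) conflict if d(z^{k+1}_γ, z^{k+1}_σ) < δ^k/4 for some children (k+1,γ) ≤ (k,α) and (k+1,σ) ≤ (k,β). Then the number of indices (k,β) conflicting with any fixed (k,α) is bounded by a constant depending only on the geometric doubling constant and δ. -/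
open Metric

lemma doubling_iter {X : Type} [MetricSpace X] (N : ℕ)
    (H : ∀ (x : X) (r : ℝ), 0 < r → ∃ t : Finset X, t.card ≤ N ∧
      ball x r ⊆ ⋃ c ∈ t, ball c (r / 2)) :
    ∀ (n : ℕ) (x : X) (r : ℝ), 0 < r → ∃ t : Finset X, t.card ≤ N ^ n ∧
      ball x r ⊆ ⋃ c ∈ t, ball c (r / 2 ^ n) := by
  intro n
  induction n with
  | zero =>
    intro x r hr
    refine ⟨{x}, by simp, ?_⟩
    simp
  | succ n ih =>
    intro x r hr
    obtain ⟨t, htc, hts⟩ := ih x r hr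
    have hr2 : 0 < r / 2 ^ n := by positivity
    classical
    choose f hf1 hf2 using fun c : X => H c (r / 2 ^ n) hr2
    refine ⟨t.biUnion f, ?_, ?_⟩
    · calc (t.biUnion f).card ≤ t.card * N ^ 1 := by
            simpa using Finset.card_biUnion_le_card_mul t f N (fun c _ => hf1 c)
        _ ≤ N ^ n * N ^ 1 := by
            exact Nat.mul_le_mul_right _ htc
        _ = N ^ (n + 1) := by ring
    · intro y hy
      obtain ⟨c, hc, hyc⟩ := by simpa using hts hy
      have := hf2 c hyc
      obtain ⟨c', hc', hyc'⟩ := by simpa using this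
      simp only [Set.mem_iUnion]
      refine ⟨c', Finset.mem_biUnion.2 ⟨c, hc, hc'⟩, ?_⟩
      have : r / 2 ^ n / 2 = r / 2 ^ (n + 1) := by ring
      rwa [this] at hyc'

/-- In a geometrically doubling metric space with reference points
`z α` at level `k` (pairwise distances `≥ δ^k`) and children `w γ` at level `k+1`
(pairwise distances `≥ δ^{k+1}`, each child within distance `δ^k` of its parent),
the number of indices `β` conflicting with a fixed `α` — i.e. such that
`d(w γ, w σ) < δ^k/4` for some children `γ` of `α` and `σ` of `β` — is bounded by a
constant `M` depending only on the doubling constant `N` and on `δ`. -/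
theorem stmt13 (N : ℕ) (hN : 1 ≤ N) (δ : ℝ) (hδ0 : 0 < δ) (hδ1 : δ < 1) :
    ∃ M : ℕ,
      ∀ (X : Type) [MetricSpace X],
        (∀ (x : X) (r : ℝ), 0 < r → ∃ t : Finset X, t.card ≤ N ∧
          ball x r ⊆ ⋃ c ∈ t, ball c (r / 2)) →
        ∀ (k : ℤ) (A B : Type) (z : A → X) (w : B → X) (par : B → A),
        (∀ a a' : A, a ≠ a' → δ ^ k ≤ dist (z a) (z a')) →
        (∀ b b' : B, b ≠ b' → δ ^ (k + 1) ≤ dist (w b) (w b')) →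
        (∀ b : B, dist (w b) (z (par b)) < δ ^ k) →
        ∀ a : A,
          {β : A | ∃ γ σ : B, par γ = a ∧ par σ = β ∧
            dist (w γ) (w σ) < δ ^ k / 4}.Finite ∧
          {β : A | ∃ γ σ : B, par γ = a ∧ par σ = β ∧
            dist (w γ) (w σ) < δ ^ k / 4}.ncard ≤ M := by
  classical
  refine ⟨N ^ 3, ?_⟩
  intro X _ H k A B z w par hz hw hpar a
  set D : ℝ := δ ^ k with hD
  have hDpos : 0 < D := zpow_pos hδ0 k
  set S : Set A := {β : A | ∃ γ σ : B, par γ = a ∧ par σ = β ∧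
      dist (w γ) (w σ) < δ ^ k / 4} with hS
  -- every conflicting β has z β within 3D of z a
  have hball : ∀ β ∈ S, z β ∈ ball (z a) (3 * D) := by
    rintro β ⟨γ, σ, hγ, hσ, hdist⟩
    have h1 : dist (w γ) (z a) < D := hγ ▸ hpar γ
    have h2 : dist (w σ) (z β) < D := hσ ▸ hpar σ
    have : dist (z β) (z a) ≤ dist (z β) (w σ) + dist (w σ) (w γ) + dist (w γ) (z a) :=
      dist_triangle4 _ _ _ _
    rw [mem_ball]
    rw [dist_comm] at h2
    rw [dist_comm (z β) (w σ), dist_comm (w σ) (w γ), dist_comm (w σ) (z β)] at this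
    rw [← hD] at hdist
    linarith
  obtain ⟨t, htc, hts⟩ := doubling_iter N H 3 (z a) (3 * D) (by positivity)
  -- the covering balls have radius 3D/8 < D/2
  have hrad : (3 : ℝ) * D / 2 ^ 3 = 3 * D / 8 := by norm_num
  -- assign to each β ∈ S a center
  have hassign : ∀ β ∈ S, ∃ c ∈ t, z β ∈ ball c (3 * D / 8) := by
    intro β hβ
    have := hts (hball β hβ)
    simpa [hrad] using this
  set f : A → X := fun β =>
    if h : ∃ c ∈ t, z β ∈ ball c (3 * D / 8) then h.choose else z β with hfdef
  have hf1 : ∀ β ∈ S, f β ∈ t := by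
    intro β hβ
    have h := hassign β hβ
    simp only [hfdef, dif_pos h]
    exact h.choose_spec.1
  have hf2 : ∀ β ∈ S, z β ∈ ball (f β) (3 * D / 8) := by
    intro β hβ
    have h := hassign β hβ
    simp only [hfdef, dif_pos h]
    exact h.choose_spec.2
  have hinj : Set.InjOn f S := by
    intro β hβ β' hβ' hff
    by_contra hne
    have hsep := hz β β' hne
    have h1 := hf2 β hβ
    have h2 := hf2 β' hβ'
    rw [hff] at h1
    have : dist (z β) (z β') < 3 * D / 8 + 3 * D / 8 := by
      calc dist (z β) (z β') ≤ dist (z β) (f β') + dist (f β') (z β') := dist_triangle _ _ _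
        _ < 3 * D / 8 + 3 * D / 8 := by
            rw [mem_ball] at h1 h2
            exact add_lt_add h1 (by rwa [dist_comm] at h2)
    linarith
  have himg : f '' S ⊆ ↑t := by
    rintro _ ⟨β, hβ, rfl⟩
    exact hf1 β hβ
  have htfin : (↑t : Set X).Finite := t.finite_toSet
  have hfin : S.Finite := Set.Finite.of_finite_image (htfin.subset himg) hinj
  refine ⟨hfin, ?_⟩
  calc S.ncard = (f '' S).ncard := (Set.ncard_image_of_injOn hinj).symm
    _ ≤ (↑t : Set X).ncard := Set.ncard_le_ncard himg htfin
    _ = t.card := by simp [Set.ncard_coe_finset]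
    _ ≤ N ^ 3 := htc
end

section
/- Let f ∈ L^p(X, Y) with support in a ball B(x₀, δ^m), and suppose h = f/b₁ is L-Lipschitz, where b₁ ∈ L^∞(μ) with ‖b₁‖_∞ ≤ C_b and μ is upper doubling with dominating function λ. Let E^{b₁}_{k₀}f = Σ_α ⟨f⟩_{Q^{k₀}_α} ⟨b₁⟩_{Q^{k₀}_α}^{−1} χ_{Q^{k₀}_α} b₁ be the adapted conditional expectation over dyadic cubes of generation k₀ ≥ m with diameter ≤ C₀ δ^{k₀}, on cubes where |⟨b₁⟩_Q| ≥ a > 0. Then ‖f − E^{b₁}_{k₀} f‖_{L^p(X,Y)} ≤ C L λ(x₀, δ^m)^{1/p} δ^{k₀}. -/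
/-!
On a cube `Q` with `⟨b⟩_Q ≠ 0` and `x ∈ Q`,
`f x - E^b f x = ⟨b⟩_Q⁻¹ • b x • (⟨b⟩_Q • h x - ⟨b h⟩_Q)`, and the bracket is the average over
`Q` of `b z • (h x - h z)`, so it is at most `Cb L diam Q`. Hence the error is bounded pointwise
by `a⁻¹ Cb² C₀ L δ^{k₀}`; it vanishes on cubes missing the support ball `B(x₀, δ^m)`, and the
other cubes lie in `B(x₀, δ^m + C₀ δ^{k₀}) ⊆ B(x₀, 2ⁿ δ^m)`, whose measure is at most
`Clⁿ λ(x₀, δ^m)` by upper doubling.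
-/

open MeasureTheory Metric

section Averages

variable {X E : Type*} [MeasurableSpace X] [NormedAddCommGroup E] [NormedSpace ℝ E]
  {μ : Measure X} {s : Set X}

lemma measure_ne_top_of_setAverage_ne_zero {g : X → E} (hg : ⨍ z in s, g z ∂μ ≠ 0) :
    μ s ≠ ⊤ := by
  intro hs
  simp [setAverage_eq, measureReal_def, hs] at hg

lemma integrableOn_of_setAverage_ne_zero {g : X → E} (hg : ⨍ z in s, g z ∂μ ≠ 0) :
    IntegrableOn g s μ := by
  by_contra hint
  simp [setAverage_eq, integral_undef hint] at hg

lemma norm_setAverage_le_of_norm_le {g : X → E} {K : ℝ} (hK : 0 ≤ K)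
    (hg : ∀ z ∈ s, ‖g z‖ ≤ K) : ‖⨍ z in s, g z ∂μ‖ ≤ K := by
  rw [setAverage_eq, norm_smul, norm_inv, Real.norm_of_nonneg measureReal_nonneg]
  rcases eq_or_ne (μ s) ⊤ with hs | hs
  · simp [measureReal_def, hs, hK]
  rcases eq_or_ne (μ.real s) 0 with hs0 | hs0
  · simp [hs0, hK]
  calc (μ.real s)⁻¹ * ‖∫ z in s, g z ∂μ‖ ≤ (μ.real s)⁻¹ * (K * μ.real s) := by
        gcongr
        exact norm_setIntegral_le_of_norm_le_const hs.lt_top hg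
    _ = K := by field_simp

end Averages

lemma le_pow_mul_of_doubling_s19 {g : ℝ → ℝ} {Cl : ℝ} (hCl : 0 ≤ Cl)
    (hdoub : ∀ r, 0 < r → g (2 * r) ≤ Cl * g r) (n : ℕ) {r : ℝ} (hr : 0 < r) :
    g (2 ^ n * r) ≤ Cl ^ n * g r := by
  induction n with
  | zero => simp
  | succ n ih =>
    calc g (2 ^ (n + 1) * r) = g (2 * (2 ^ n * r)) := by ring_nf
      _ ≤ Cl * g (2 ^ n * r) := hdoub _ (by positivity)
      _ ≤ Cl * (Cl ^ n * g r) := by gcongr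
      _ = Cl ^ (n + 1) * g r := by ring

lemma measure_ball_rpow_le_of_upperDoubling {X : Type*} [MetricSpace X] [MeasurableSpace X]
    {μ : Measure X} {x : X} {lam : ℝ → ℝ} {Cl : ℝ} (hCl : 1 ≤ Cl)
    (hdoub : ∀ r, 0 < r → lam (2 * r) ≤ Cl * lam r)
    (hμ : ∀ r, 0 < r → μ (ball x r) ≤ ENNReal.ofReal (lam r))
    {r R : ℝ} (hr : 0 < r) (hlam : 0 ≤ lam r) {n : ℕ} (hR : R ≤ 2 ^ n * r) {p : ℝ} (hp : 1 ≤ p) :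
    μ (ball x R) ^ (1 / p) ≤ ENNReal.ofReal (Cl ^ n * lam r ^ (1 / p)) := by
  calc μ (ball x R) ^ (1 / p) ≤ μ (ball x (2 ^ n * r)) ^ (1 / p) := by gcongr
    _ ≤ ENNReal.ofReal (Cl ^ n * lam r) ^ (1 / p) := by
        gcongr
        exact (hμ _ (by positivity)).trans (ENNReal.ofReal_le_ofReal
          (le_pow_mul_of_doubling_s19 (by positivity) hdoub n hr))
    _ = ENNReal.ofReal ((Cl ^ n) ^ (1 / p) * lam r ^ (1 / p)) := by
        rw [ENNReal.ofReal_rpow_of_nonneg (by positivity) (by positivity),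
          Real.mul_rpow (by positivity) hlam]
    _ ≤ ENNReal.ofReal (Cl ^ n * lam r ^ (1 / p)) := by
        gcongr
        exact Real.rpow_le_self_of_one_le (one_le_pow₀ hCl) (div_le_one_of_le₀ hp (by linarith))

section AdaptedExpectation

variable {X Y : Type*} [MeasurableSpace X] [NormedAddCommGroup Y] [NormedSpace ℂ Y]
  {μ : Measure X}

/-- The paper's `E^{b}_{k} f` for the partition `Q` into cubes of generation `k`. -/
noncomputable def adaptedExpectation {ι : Type*} (μ : Measure X) (Q : ι → Set X) (b : X → ℂ)
    (f : X → Y) (x : X) : Y :=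
  ∑' i, (Q i).indicator (fun y => (⨍ z in Q i, b z ∂μ)⁻¹ • b y • ⨍ z in Q i, f z ∂μ) x

lemma adaptedExpectation_eq_of_mem {ι : Type*} {Q : ι → Set X}
    (hQ : Pairwise fun i j => Disjoint (Q i) (Q j))
    (b : X → ℂ) (f : X → Y) {i : ι} {x : X} (hx : x ∈ Q i) :
    adaptedExpectation μ Q b f x = (⨍ z in Q i, b z ∂μ)⁻¹ • b x • ⨍ z in Q i, f z ∂μ := by
  rw [adaptedExpectation, tsum_eq_single i, Set.indicator_of_mem hx]
  exact fun j hji => Set.indicator_of_notMem (fun hxj => (hQ hji).le_bot ⟨hxj, hx⟩) _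

variable [CompleteSpace Y]

lemma setAverage_smul_sub_setAverage_smul {s : Set X} {b : X → ℂ} {h : X → Y}
    (hb : IntegrableOn b s μ) (hbh : IntegrableOn (fun z => b z • h z) s μ) (x : X) :
    (⨍ z in s, b z ∂μ) • h x - ⨍ z in s, b z • h z ∂μ = ⨍ z in s, b z • (h x - h z) ∂μ := by
  simp only [setAverage_eq, smul_assoc, ← integral_smul_const, smul_sub]
  rw [integral_sub (hb.smul_const (h x)) hbh, smul_sub]

lemma norm_smul_sub_adaptedAverage_le {s : Set X} {b : X → ℂ} {h : X → Y} {a Cb ε : ℝ}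
    (ha : 0 < a) (havg : a ≤ ‖⨍ z in s, b z ∂μ‖) (hb : ∀ z ∈ s, ‖b z‖ ≤ Cb)
    (hbh : IntegrableOn (fun z => b z • h z) s μ) {x : X} (hx : x ∈ s)
    (hosc : ∀ z ∈ s, ‖h x - h z‖ ≤ ε) :
    ‖b x • h x - (⨍ z in s, b z ∂μ)⁻¹ • b x • ⨍ z in s, b z • h z ∂μ‖ ≤
      a⁻¹ * (Cb * (Cb * ε)) := by
  set c := ⨍ z in s, b z ∂μ
  have hc : c ≠ 0 := norm_pos_iff.1 (ha.trans_le havg)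
  have hCb : 0 ≤ Cb := (norm_nonneg _).trans (hb x hx)
  have hε : 0 ≤ ε := (norm_nonneg _).trans (hosc x hx)
  have hbracket : ‖c • h x - ⨍ z in s, b z • h z ∂μ‖ ≤ Cb * ε := by
    rw [setAverage_smul_sub_setAverage_smul (integrableOn_of_setAverage_ne_zero hc) hbh]
    refine norm_setAverage_le_of_norm_le (by positivity) fun z hz => ?_
    rw [norm_smul]
    exact mul_le_mul (hb z hz) (hosc z hz) (norm_nonneg _) hCb
  calc ‖b x • h x - c⁻¹ • b x • ⨍ z in s, b z • h z ∂μ‖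
      = ‖c‖⁻¹ * (‖b x‖ * ‖c • h x - ⨍ z in s, b z • h z ∂μ‖) := by
        rw [← norm_inv, ← norm_smul, ← norm_smul, smul_sub, smul_sub, smul_comm (b x) c,
          inv_smul_smul₀ hc]
    _ ≤ a⁻¹ * (Cb * (Cb * ε)) := by
        gcongr
        · exact hb x hx

variable [MetricSpace X]

theorem ae_norm_sub_adaptedExpectation_le {ι : Type*} [Countable ι] {Q : ι → Set X}
    (hdisj : Pairwise fun i j => Disjoint (Q i) (Q j)) (hcover : ⋃ i, Q i = Set.univ)
    {D : ℝ} (hD : 0 ≤ D) (hdiam : ∀ i, ediam (Q i) ≤ ENNReal.ofReal D)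
    {b : X → ℂ} {a Cb : ℝ} (ha : 0 < a) (havg : ∀ i, 0 < μ (Q i) → a ≤ ‖⨍ z in Q i, b z ∂μ‖)
    (hb : ∀ x, ‖b x‖ ≤ Cb) {h : X → Y} {L : ℝ} (hL : 0 ≤ L)
    (hh : ∀ x y, ‖h x - h y‖ ≤ L * dist x y) {x₀ : X} {r : ℝ}
    (hsupp : ∀ x, x ∉ ball x₀ r → b x • h x = 0)
    {p : ENNReal} (hp : 1 ≤ p) (hf : MemLp (fun x => b x • h x) p μ) :
    ∀ᵐ x ∂μ, ‖b x • h x - adaptedExpectation μ Q b (fun x => b x • h x) x‖ ≤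
      (ball x₀ (r + D)).indicator (fun _ => a⁻¹ * (Cb * (Cb * (L * D)))) x := by
  have hnull : ∀ᵐ x ∂μ, ∀ i, x ∈ Q i → 0 < μ (Q i) := by
    refine ae_all_iff.2 fun i => ?_
    rcases eq_zero_or_pos (μ (Q i)) with h0 | hpos
    · filter_upwards [measure_eq_zero_iff_ae_notMem.1 h0] with x hx hxi using absurd hxi hx
    · exact ae_of_all _ fun _ _ => hpos
  filter_upwards [hnull] with x hx
  obtain ⟨i, hxi⟩ := Set.mem_iUnion.1 (hcover ▸ Set.mem_univ x)
  rw [adaptedExpectation_eq_of_mem hdisj _ _ hxi]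
  have hdist : ∀ z ∈ Q i, dist x z ≤ D := fun z hz =>
    (edist_le_ofReal hD).1 ((edist_le_ediam_of_mem hxi hz).trans (hdiam i))
  have hCb : 0 ≤ Cb := (norm_nonneg _).trans (hb x)
  by_cases hmiss : ∀ y ∈ Q i, y ∉ ball x₀ r
  · have hzero : ∀ z ∈ Q i, b z • h z = 0 := fun z hz => hsupp z (hmiss z hz)
    rw [setAverage_eq μ (fun z => b z • h z), setIntegral_eq_zero_of_forall_eq_zero hzero,
      hzero x hxi]
    simp only [smul_zero, sub_zero, norm_zero]
    exact Set.indicator_nonneg (fun _ _ => by positivity) x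
  obtain ⟨y, hyi, hy⟩ := not_forall₂.1 hmiss
  have hxball : x ∈ ball x₀ (r + D) := by
    rw [not_not, mem_ball] at hy
    rw [mem_ball]
    linarith [dist_triangle x y x₀, hdist y hyi]
  rw [Set.indicator_of_mem hxball]
  have havgi := havg i (hx i hxi)
  have : IsFiniteMeasure (μ.restrict (Q i)) := isFiniteMeasure_restrict.2
    (measure_ne_top_of_setAverage_ne_zero (norm_pos_iff.1 (ha.trans_le havgi)))
  exact norm_smul_sub_adaptedAverage_le ha havgi (fun z _ => hb z)
    ((hf.restrict _).integrable hp) hxi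
    fun z hz => (hh x z).trans (mul_le_mul_of_nonneg_left (hdist z hz) hL)

theorem eLpNorm_sub_adaptedExpectation_le {ι : Type*} [Countable ι] {Q : ι → Set X}
    (hdisj : Pairwise fun i j => Disjoint (Q i) (Q j)) (hcover : ⋃ i, Q i = Set.univ)
    {D : ℝ} (hD : 0 ≤ D) (hdiam : ∀ i, ediam (Q i) ≤ ENNReal.ofReal D)
    {b : X → ℂ} {a Cb : ℝ} (ha : 0 < a) (havg : ∀ i, 0 < μ (Q i) → a ≤ ‖⨍ z in Q i, b z ∂μ‖)
    (hb : ∀ x, ‖b x‖ ≤ Cb) {h : X → Y} {L : ℝ} (hL : 0 ≤ L)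
    (hh : ∀ x y, ‖h x - h y‖ ≤ L * dist x y) {x₀ : X} {r : ℝ}
    (hsupp : ∀ x, x ∉ ball x₀ r → b x • h x = 0)
    {p : ENNReal} (hp : 1 ≤ p) (hf : MemLp (fun x => b x • h x) p μ) :
    eLpNorm (fun x => b x • h x - adaptedExpectation μ Q b (fun x => b x • h x) x) p μ ≤
      ‖a⁻¹ * (Cb * (Cb * (L * D)))‖ₑ * μ (ball x₀ (r + D)) ^ (1 / p.toReal) :=
  (eLpNorm_mono_ae_real (ae_norm_sub_adaptedExpectation_le hdisj hcover hD hdiam ha havg hb hL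
    hh hsupp hp hf)).trans (eLpNorm_indicator_const_le _ p)

end AdaptedExpectation

theorem stmt19_general (N : ℕ) (Cl a Cb C₀ p δ : ℝ)
    (hCl : 1 ≤ Cl) (ha : 0 < a) (hCb : 0 < Cb) (hC₀ : 0 < C₀)
    (hp : 1 < p) (hδ0 : 0 < δ) (hδ1 : δ < 1) :
    ∃ C : ℝ, 0 < C ∧
      ∀ (X : Type) [MeasurableSpace X] [MetricSpace X]
        (Y : Type) [NormedAddCommGroup Y] [NormedSpace ℂ Y] [CompleteSpace Y]
        (μ : Measure X) (lam : X → ℝ → ℝ),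
        -- geometric doubling
        (∀ (x : X) (r : ℝ), 0 < r → ∃ t : Finset X, t.card ≤ N ∧
          ball x r ⊆ ⋃ c ∈ t, ball c (r / 2)) →
        -- upper doubling
        (∀ x r, 0 < r → 0 < lam x r) →
        (∀ x r s, 0 < r → r ≤ s → lam x r ≤ lam x s) →
        (∀ x r, 0 < r → lam x (2 * r) ≤ Cl * lam x r) →
        (∀ x r, 0 < r → μ (ball x r) ≤ ENNReal.ofReal (lam x r)) →
        ∀ (m k₀ : ℤ), m ≤ k₀ →
        ∀ (x₀ : X) (b₁ : X → ℂ) (h : X → Y) (L : ℝ) (f : X → Y),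
        0 ≤ L →
        (∀ x, ‖b₁ x‖ ≤ Cb) →
        (∀ x y, ‖h x - h y‖ ≤ L * dist x y) →
        f = (fun x => b₁ x • h x) →
        (∀ x, x ∉ ball x₀ (δ ^ m) → f x = 0) →
        MemLp f (ENNReal.ofReal p) μ →
        -- dyadic cubes of generation k₀
        ∀ (Qc : ℕ → Set X),
        (∀ i, MeasurableSet (Qc i)) →
        (Pairwise fun i j => Disjoint (Qc i) (Qc j)) →
        (⋃ i, Qc i) = Set.univ →
        (∀ i, EMetric.diam (Qc i) ≤ ENNReal.ofReal (C₀ * δ ^ k₀)) →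
        (∀ i, 0 < μ (Qc i) → μ (Qc i) ≠ ⊤) →
        (∀ i, 0 < μ (Qc i) →
          a ≤ ‖(μ (Qc i)).toReal⁻¹ • ∫ x in Qc i, b₁ x ∂μ‖) →
        eLpNorm
          (fun x => f x -
            ∑' i, Set.indicator (Qc i)
              (fun y => ((μ (Qc i)).toReal⁻¹ • ∫ z in Qc i, b₁ z ∂μ)⁻¹ •
                b₁ y • ((μ (Qc i)).toReal⁻¹ • ∫ z in Qc i, f z ∂μ)) x)
          (ENNReal.ofReal p) μ ≤
        ENNReal.ofReal (C * L * (lam x₀ (δ ^ m)) ^ (1 / p) * δ ^ k₀) := by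
  obtain ⟨n, hn⟩ : ∃ n : ℕ, 1 + C₀ < 2 ^ n := pow_unbounded_of_one_lt _ one_lt_two
  refine ⟨a⁻¹ * Cb ^ 2 * C₀ * Cl ^ n, by positivity, ?_⟩
  intro X _ _ Y _ _ _ μ lam _ hlam _ hlam_doubling hμ m k₀ hmk x₀ b₁ h L f hL hb hh hf
    hsupp hfp Qc _ hdisj hcover hdiam _ havg
  subst hf
  have hδm : 0 < δ ^ m := zpow_pos hδ0 m
  have hR : δ ^ m + C₀ * δ ^ k₀ ≤ 2 ^ n * δ ^ m := by
    nlinarith [zpow_le_zpow_right_of_le_one₀ hδ0 hδ1.le hmk]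
  have hball := measure_ball_rpow_le_of_upperDoubling hCl (hlam_doubling x₀) (hμ x₀) hδm
    (hlam x₀ _ hδm).le hR hp.le
  have hE := eLpNorm_sub_adaptedExpectation_le hdisj hcover (by positivity) hdiam ha
    (by simpa only [setAverage_eq, measureReal_def] using havg) hb hL hh hsupp
    (ENNReal.one_le_ofReal.2 hp.le) hfp
  simp only [adaptedExpectation, setAverage_eq, measureReal_def] at hE
  refine hE.trans ?_
  rw [Real.enorm_eq_ofReal (by positivity), ENNReal.toReal_ofReal (by linarith)]
  calc _ ≤ ENNReal.ofReal (a⁻¹ * (Cb * (Cb * (L * (C₀ * δ ^ k₀))))) *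
        ENNReal.ofReal (Cl ^ n * lam x₀ (δ ^ m) ^ (1 / p)) := by gcongr
    _ = _ := by rw [← ENNReal.ofReal_mul (by positivity)]; ring_nf

/-- If `f ∈ L^p(X,Y)` is supported in `B(x₀, δ^m)`, `h = f/b₁` is
`L`-Lipschitz with `‖b₁‖_∞ ≤ Cb`, and `E^{b₁}_{k₀} f = Σ_α ⟨f⟩_Q ⟨b₁⟩_Q⁻¹ χ_Q b₁` is the
adapted conditional expectation over dyadic cubes of generation `k₀ ≥ m` (of diameter
`≤ C₀ δ^{k₀}`, on which `|⟨b₁⟩_Q| ≥ a`), then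
`‖f − E^{b₁}_{k₀} f‖_{L^p(X,Y)} ≤ C L λ(x₀, δ^m)^{1/p} δ^{k₀}`. -/
theorem stmt19 (N : ℕ) (hN : 1 ≤ N) (Cl a Cb C₀ p δ : ℝ)
    (hCl : 1 ≤ Cl) (ha : 0 < a) (hCb : 0 < Cb) (hC₀ : 0 < C₀)
    (hp : 1 < p) (hδ0 : 0 < δ) (hδ1 : δ < 1) :
    ∃ C : ℝ, 0 < C ∧
      ∀ (X : Type) [MeasurableSpace X] [MetricSpace X]
        (Y : Type) [NormedAddCommGroup Y] [NormedSpace ℂ Y] [CompleteSpace Y]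
        (μ : Measure X) (lam : X → ℝ → ℝ),
        -- geometric doubling
        (∀ (x : X) (r : ℝ), 0 < r → ∃ t : Finset X, t.card ≤ N ∧
          ball x r ⊆ ⋃ c ∈ t, ball c (r / 2)) →
        -- upper doubling
        (∀ x r, 0 < r → 0 < lam x r) →
        (∀ x r s, 0 < r → r ≤ s → lam x r ≤ lam x s) →
        (∀ x r, 0 < r → lam x (2 * r) ≤ Cl * lam x r) →
        (∀ x r, 0 < r → μ (ball x r) ≤ ENNReal.ofReal (lam x r)) →
        ∀ (m k₀ : ℤ), m ≤ k₀ →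
        ∀ (x₀ : X) (b₁ : X → ℂ) (h : X → Y) (L : ℝ) (f : X → Y),
        0 ≤ L →
        (∀ x, ‖b₁ x‖ ≤ Cb) →
        (∀ x y, ‖h x - h y‖ ≤ L * dist x y) →
        f = (fun x => b₁ x • h x) →
        (∀ x, x ∉ ball x₀ (δ ^ m) → f x = 0) →
        MemLp f (ENNReal.ofReal p) μ →
        -- dyadic cubes of generation k₀
        ∀ (Qc : ℕ → Set X),
        (∀ i, MeasurableSet (Qc i)) →
        (Pairwise fun i j => Disjoint (Qc i) (Qc j)) →
        (⋃ i, Qc i) = Set.univ →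
        (∀ i, EMetric.diam (Qc i) ≤ ENNReal.ofReal (C₀ * δ ^ k₀)) →
        (∀ i, 0 < μ (Qc i) → μ (Qc i) ≠ ⊤) →
        (∀ i, 0 < μ (Qc i) →
          a ≤ ‖(μ (Qc i)).toReal⁻¹ • ∫ x in Qc i, b₁ x ∂μ‖) →
        eLpNorm
          (fun x => f x -
            ∑' i, Set.indicator (Qc i)
              (fun y => ((μ (Qc i)).toReal⁻¹ • ∫ z in Qc i, b₁ z ∂μ)⁻¹ •
                b₁ y • ((μ (Qc i)).toReal⁻¹ • ∫ z in Qc i, f z ∂μ)) x)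
          (ENNReal.ofReal p) μ ≤
        ENNReal.ofReal (C * L * (lam x₀ (δ ^ m)) ^ (1 / p) * δ ^ k₀) :=
  stmt19_general N Cl a Cb C₀ p δ hCl ha hCb hC₀ hp hδ0 hδ1
end
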